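/- arXiv:math/0404054 — 5 statements merged into one kernel-verified Lean document; each statement's English description precedes it below -/
import Mathlib

section
/- Let (X_n) be a transient Markov chain on a countable state space Y with initial state ρ, Green function G(x,y) = Σ_n P_x[X_n = y], and Martin kernel K(x,y) = G(x,y)/G(ρ,y). For any subset Λ ⊆ Y, the probability that the chain ever visits Λ is at most Cap_K(Λ), the capacity of Λ with respect to the kernel K. -/
/-!
Split the event of hitting `Λ` according to the time `n` and the place `x` of the first entrance,
and let `ν x` be the probability that the first entrance happens at `x`, so that `∑ₓ ν x` is the
hitting probability. By the Markov property at the (deterministic) time `n`, `∑ₓ ν x * G x y`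
counts expected visits to `y` after the first entrance, hence is at most `G ρ y`. Dividing by
`G ρ y`, the `K`-potential of `ν` is at most `1` everywhere, so the probability measure
`ν / ∑ₓ ν x` on `Λ` has `K`-energy at most `(∑ₓ ν x)⁻¹`.
-/

open MeasureTheory ENNReal
open scoped Classical

/-- Capacity of a set `Λ` in a countable space with respect to kernel `K`:
the reciprocal of the infimum of `K`-energies over probability measures on `Λ`. -/
noncomputable def capK {Y : Type*} (K : Y → Y → ℝ≥0∞) (Λ : Set Y) : ℝ≥0∞ :=
  (⨅ μ : {μ : Y → ℝ≥0∞ // (∑' y, μ y) = 1 ∧ ∀ y ∉ Λ, μ y = 0},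
    ∑' x, ∑' y, K x y * μ.1 x * μ.1 y)⁻¹

theorem measure_eq_tsum_inter_preimage_singleton {α β : Type*} [MeasurableSpace α]
    [MeasurableSpace β] [Countable β] [MeasurableSingletonClass β] (μ : Measure α) {f : α → β}
    (hf : Measurable f) (s : Set α) : μ s = ∑' b, μ (s ∩ f ⁻¹' {b}) := by
  have hfib : ∀ b, MeasurableSet (f ⁻¹' {b}) := fun b => hf (measurableSet_singleton b)
  have hunion : (⋃ b, f ⁻¹' {b}) = Set.univ := by
    rw [← Set.preimage_iUnion, Set.iUnion_of_singleton, Set.preimage_univ]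
  rw [← Measure.restrict_apply_univ, ← hunion,
    measure_iUnion (fun b b' hb => Set.disjoint_singleton.mpr hb |>.preimage f) hfib]
  simp_rw [Measure.restrict_apply (hfib _), Set.inter_comm]

theorem dependsOn_mem_inter_coord_succ {Y : Type*} {S : Set (ℕ → Y)} {n : ℕ}
    (hS : DependsOn (· ∈ S) (Set.Iic n)) (y : Y) :
    DependsOn (· ∈ S ∩ {ω | ω (n + 1) = y}) (Set.Iic (n + 1)) := fun _ _ hω =>
  congrArg₂ (· ∧ ·) (hS fun i hi => hω i (Set.Iic_subset_Iic.mpr n.le_succ hi))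
    (congrArg (· = y) (hω (n + 1) Set.self_mem_Iic))

section PathSpace

variable {Y : Type*} [MeasurableSpace Y] [Countable Y] [MeasurableSingletonClass Y]

theorem measurableSet_of_dependsOn_Iic {S : Set (ℕ → Y)} {n : ℕ}
    (hS : DependsOn (· ∈ S) (Set.Iic n)) : MeasurableSet S := by
  set π : (ℕ → Y) → (Set.Iic n → Y) := fun ω i => ω i
  have hπ : Measurable π := measurable_pi_lambda _ fun i => measurable_pi_apply i.1
  have : S = π ⁻¹' (π '' S) := by
    refine (Set.subset_preimage_image π S).antisymm ?_
    rintro ω ⟨ω', hω', hπω⟩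
    exact (hS fun i hi => (congrFun hπω ⟨i, hi⟩)).mp hω'
  rw [this]
  exact hπ MeasurableSet.of_discrete

theorem measure_eq_tsum_inter_coord (μ : Measure (ℕ → Y)) (s : Set (ℕ → Y)) (n : ℕ) :
    μ s = ∑' y, μ (s ∩ {ω | ω n = y}) :=
  measure_eq_tsum_inter_preimage_singleton μ (measurable_pi_apply n) s

theorem measurableSet_coord_eq (n : ℕ) (y : Y) : MeasurableSet {ω : ℕ → Y | ω n = y} :=
  measurableSet_eq_fun (measurable_pi_apply n) measurable_const

end PathSpace

def HasCylinderLaw {Y : Type*} [MeasurableSpace Y] (p : Y → Y → ℝ≥0∞)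
    (P : Y → Measure (ℕ → Y)) : Prop :=
  ∀ (x : Y) (f : ℕ → Y) (n : ℕ),
    P x {ω | ∀ i ≤ n, ω i = f i} =
      (if f 0 = x then 1 else 0) * ∏ i ∈ Finset.range n, p (f i) (f (i + 1))

noncomputable def transitionPow {Y : Type*} (p : Y → Y → ℝ≥0∞) : ℕ → Y → Y → ℝ≥0∞
  | 0 => fun z y => if z = y then 1 else 0
  | k + 1 => fun z y => ∑' z', p z z' * transitionPow p k z' y

namespace HasCylinderLaw

variable {Y : Type*} [MeasurableSpace Y] {p : Y → Y → ℝ≥0∞} {P : Y → Measure (ℕ → Y)}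

theorem measure_cylinder_inter_succ (h : HasCylinderLaw p P) (x : Y) (f : ℕ → Y) (n : ℕ)
    (z' : Y) :
    P x ({ω | ∀ i ≤ n, ω i = f i} ∩ {ω | ω (n + 1) = z'}) =
      P x {ω | ∀ i ≤ n, ω i = f i} * p (f n) z' := by
  set g := Function.update f (n + 1) z'
  have hg : ∀ i ≤ n, g i = f i := fun i hi => Function.update_of_ne (by omega) _ _
  have hgn : g (n + 1) = z' := Function.update_self _ _ _
  have hset : {ω : ℕ → Y | ∀ i ≤ n, ω i = f i} ∩ {ω | ω (n + 1) = z'} =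
      {ω | ∀ i ≤ n + 1, ω i = g i} := by
    ext ω
    constructor
    · rintro ⟨hf, hz⟩ i hi
      rcases Nat.le_succ_iff.mp hi with hi | rfl
      · rw [hg i hi]; exact hf i hi
      · rw [hgn]; exact hz
    · intro hω
      exact ⟨fun i hi => hg i hi ▸ hω i (by omega), hgn ▸ hω (n + 1) le_rfl⟩
  rw [hset, h, h, Finset.prod_range_succ, hg 0 (Nat.zero_le n), hg n le_rfl, hgn, mul_assoc]
  congr 2
  exact Finset.prod_congr rfl fun i hi => by
    rw [hg i (by simp at hi; omega), hg (i + 1) (by simp at hi; omega)]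

theorem measure_coord_zero (h : HasCylinderLaw p P) (x w : Y) :
    P x {ω | ω 0 = w} = if w = x then 1 else 0 := by
  simpa using h x (fun _ => w) 0

variable [Countable Y] [MeasurableSingletonClass Y]

theorem measure_inter_coord_succ (h : HasCylinderLaw p P) {S : Set (ℕ → Y)} {n : ℕ} {z : Y}
    (hS : DependsOn (· ∈ S) (Set.Iic n)) (hSz : S ⊆ {ω | ω n = z}) (x z' : Y) :
    P x (S ∩ {ω | ω (n + 1) = z'}) = P x S * p z z' := by
  set π : (ℕ → Y) → (Set.Iic n → Y) := fun ω i => ω i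
  have hπ : Measurable π := measurable_pi_lambda _ fun i => measurable_pi_apply i.1
  rw [measure_eq_tsum_inter_preimage_singleton (P x) hπ,
    measure_eq_tsum_inter_preimage_singleton (P x) hπ S, ← ENNReal.tsum_mul_right]
  congr 1 with v
  rcases (S ∩ π ⁻¹' {v}).eq_empty_or_nonempty with hempty | ⟨ω₀, hω₀S, rfl : π ω₀ = v⟩
  · have : S ∩ {ω | ω (n + 1) = z'} ∩ π ⁻¹' {v} = ∅ :=
      Set.subset_empty_iff.mp (hempty ▸ fun ω ⟨⟨hS, _⟩, hv⟩ => ⟨hS, hv⟩)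
    rw [this, hempty, measure_empty, zero_mul]
  · have hfibre : π ⁻¹' {π ω₀} = {ω | ∀ i ≤ n, ω i = ω₀ i} := by
      ext ω
      simp [π, funext_iff]
    have hcyl : π ⁻¹' {π ω₀} ⊆ S := fun ω hω =>
      (hS fun i hi => (congrFun (hω : π ω = π ω₀).symm ⟨i, hi⟩)).mp hω₀S
    rw [Set.inter_eq_right.mpr hcyl, Set.inter_right_comm, Set.inter_eq_right.mpr hcyl, hfibre,
      measure_cylinder_inter_succ h, hSz hω₀S]

theorem measure_inter_coord_zero_self (h : HasCylinderLaw p P) (x : Y) (A : Set (ℕ → Y)) :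
    P x (A ∩ {ω | ω 0 = x}) = P x A := by
  rw [measure_eq_tsum_inter_coord (P x) A 0, tsum_eq_single x]
  intro w hw
  exact measure_mono_null Set.inter_subset_right (by simp [h.measure_coord_zero, hw])

theorem measure_inter_coord_add_eq_transitionPow (h : HasCylinderLaw p P) {S : Set (ℕ → Y)}
    {n : ℕ} {z : Y} (hS : DependsOn (· ∈ S) (Set.Iic n)) (hSz : S ⊆ {ω | ω n = z})
    (x y : Y) (k : ℕ) :
    P x (S ∩ {ω | ω (n + k) = y}) = P x S * transitionPow p k z y := by
  induction k generalizing n z S with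
  | zero =>
    by_cases hzy : z = y
    · subst hzy
      simp [transitionPow, Set.inter_eq_left.mpr hSz]
    · have : S ∩ {ω | ω n = y} = ∅ :=
        Set.eq_empty_of_forall_notMem fun ω hω => hzy ((hSz hω.1).symm.trans hω.2)
      simp [transitionPow, hzy, this]
  | succ k ih =>
    calc P x (S ∩ {ω | ω (n + (k + 1)) = y})
        = ∑' z', P x (S ∩ {ω | ω (n + 1) = z'} ∩ {ω | ω (n + 1 + k) = y}) := by
          rw [measure_eq_tsum_inter_coord _ _ (n + 1), add_comm k, ← add_assoc]
          simp only [Set.inter_right_comm]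
      _ = ∑' z', P x S * p z z' * transitionPow p k z' y := by
          congr 1 with z'
          rw [ih (dependsOn_mem_inter_coord_succ hS z') Set.inter_subset_right,
            h.measure_inter_coord_succ hS hSz]
      _ = P x S * transitionPow p (k + 1) z y := by
          simp only [transitionPow, mul_assoc, ENNReal.tsum_mul_left]

theorem measure_coord_eq_transitionPow (h : HasCylinderLaw p P) (z y : Y) (k : ℕ) :
    P z {ω | ω k = y} = transitionPow p k z y := by
  have hdep : DependsOn (· ∈ {ω : ℕ → Y | ω 0 = z}) (Set.Iic 0) := fun ω ω' hω => by
    simp [hω 0 Set.self_mem_Iic]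
  have := h.measure_inter_coord_add_eq_transitionPow hdep subset_rfl z y k
  rwa [h.measure_coord_zero, if_pos rfl, one_mul, zero_add, Set.inter_comm,
    h.measure_inter_coord_zero_self] at this

theorem measure_inter_coord_add (h : HasCylinderLaw p P) {S : Set (ℕ → Y)} {n : ℕ} {z : Y}
    (hS : DependsOn (· ∈ S) (Set.Iic n)) (hSz : S ⊆ {ω | ω n = z}) (x y : Y) (k : ℕ) :
    P x (S ∩ {ω | ω (n + k) = y}) = P x S * P z {ω | ω k = y} := by
  rw [h.measure_inter_coord_add_eq_transitionPow hS hSz, h.measure_coord_eq_transitionPow]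

end HasCylinderLaw

section Hitting

variable {Y : Type*} (Λ : Set Y)

def firstHit (n : ℕ) (x : Y) : Set (ℕ → Y) :=
  {ω | ω n = x ∧ x ∈ Λ ∧ ∀ m < n, ω m ∉ Λ}

theorem dependsOn_mem_firstHit (n : ℕ) (x : Y) :
    DependsOn (· ∈ firstHit Λ n x) (Set.Iic n) := fun ω ω' hω => by
  have hω' : ∀ m ≤ n, ω m = ω' m := fun m hm => hω m hm
  simp only [firstHit, Set.mem_ofPred_eq]
  grind

theorem firstHit_subset (n : ℕ) (x : Y) : firstHit Λ n x ⊆ {ω | ω n = x} := fun _ hω => hω.1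

theorem firstHit_of_notMem {x : Y} (hx : x ∉ Λ) (n : ℕ) : firstHit Λ n x = ∅ :=
  Set.eq_empty_of_forall_notMem fun _ hω => hx hω.2.1

theorem pairwise_disjoint_firstHit :
    Pairwise (Function.onFun Disjoint fun q : ℕ × Y => firstHit Λ q.1 q.2) := by
  rintro ⟨n, x⟩ ⟨n', x'⟩ hne
  refine Set.disjoint_left.mpr fun ω ⟨hωx, hx, hbefore⟩ ⟨hωx', hx', hbefore'⟩ => ?_
  rcases lt_trichotomy n n' with hlt | rfl | hgt
  · exact hbefore' n hlt (hωx ▸ hx)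
  · exact hne (congrArg (Prod.mk n) (hωx.symm.trans hωx'))
  · exact hbefore n' hgt (hωx' ▸ hx')

theorem iUnion_firstHit : ⋃ q : ℕ × Y, firstHit Λ q.1 q.2 = {ω | ∃ n, ω n ∈ Λ} := by
  ext ω
  simp only [Set.mem_iUnion, Set.mem_ofPred_eq, firstHit, Prod.exists]
  constructor
  · rintro ⟨n, x, rfl, hx, -⟩
    exact ⟨n, hx⟩
  · intro hhit
    exact ⟨Nat.find hhit, _, rfl, Nat.find_spec hhit, fun m hm => Nat.find_min hhit hm⟩

variable [MeasurableSpace Y] [Countable Y] [MeasurableSingletonClass Y]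

noncomputable def hittingDist (μ : Measure (ℕ → Y)) (x : Y) : ℝ≥0∞ :=
  ∑' n, μ (firstHit Λ n x)

theorem tsum_hittingDist (μ : Measure (ℕ → Y)) :
    ∑' x, hittingDist Λ μ x = μ {ω | ∃ n, ω n ∈ Λ} := by
  rw [← iUnion_firstHit, measure_iUnion (pairwise_disjoint_firstHit Λ)
    fun q => measurableSet_of_dependsOn_Iic (dependsOn_mem_firstHit Λ q.1 q.2),
    ENNReal.tsum_prod (f := fun n x => μ (firstHit Λ n x)), ENNReal.tsum_comm]
  rfl

end Hitting

noncomputable def greenFn {Y : Type*} [MeasurableSpace Y] (P : Y → Measure (ℕ → Y))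
    (x y : Y) : ℝ≥0∞ :=
  ∑' n, P x {ω | ω n = y}

theorem HasCylinderLaw.tsum_hittingDist_mul_greenFn_le {Y : Type*} [MeasurableSpace Y]
    [Countable Y] [MeasurableSingletonClass Y] {p : Y → Y → ℝ≥0∞} {P : Y → Measure (ℕ → Y)}
    (h : HasCylinderLaw p P) (Λ : Set Y) (ρ y : Y) :
    ∑' x, hittingDist Λ (P ρ) x * greenFn P x y ≤ greenFn P ρ y := by
  calc ∑' x, hittingDist Λ (P ρ) x * greenFn P x y
      = ∑' x, ∑' n, ∑' k, P ρ (firstHit Λ n x ∩ {ω | ω (n + k) = y}) := by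
        congr 1 with x
        rw [hittingDist, ← ENNReal.tsum_mul_right]
        congr 1 with n
        rw [greenFn, ← ENNReal.tsum_mul_left]
        congr 1 with k
        exact (h.measure_inter_coord_add (dependsOn_mem_firstHit Λ n x)
          (firstHit_subset Λ n x) ρ y k).symm
    _ ≤ ∑' x, ∑' n, ∑' N, P ρ (firstHit Λ n x ∩ {ω | ω N = y}) :=
        ENNReal.tsum_le_tsum fun x => ENNReal.tsum_le_tsum fun n =>
          ENNReal.tsum_comp_le_tsum_of_injective (add_right_injective n)
            fun N => P ρ (firstHit Λ n x ∩ {ω | ω N = y})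
    _ = ∑' N, ∑' q : ℕ × Y, P ρ (firstHit Λ q.1 q.2 ∩ {ω | ω N = y}) := by
        rw [ENNReal.tsum_comm, ← ENNReal.tsum_prod, ENNReal.tsum_comm]
    _ ≤ ∑' N, P ρ {ω | ω N = y} := by
        gcongr with N
        calc ∑' q : ℕ × Y, P ρ (firstHit Λ q.1 q.2 ∩ {ω | ω N = y})
            ≤ P ρ (⋃ q : ℕ × Y, firstHit Λ q.1 q.2 ∩ {ω | ω N = y}) :=
              tsum_meas_le_meas_iUnion_of_disjoint _
                (fun q => (measurableSet_of_dependsOn_Iic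
                  (dependsOn_mem_firstHit Λ q.1 q.2)).inter
                  (measurableSet_coord_eq N y))
                fun q q' hqq' => (pairwise_disjoint_firstHit Λ hqq').mono
                  Set.inter_subset_left Set.inter_subset_left
          _ ≤ P ρ {ω | ω N = y} := measure_mono (Set.iUnion_subset fun _ => Set.inter_subset_right)

theorem tsum_le_capK_of_potential_le_one {Y : Type*} (K : Y → Y → ℝ≥0∞) (Λ : Set Y)
    (ν : Y → ℝ≥0∞) (hνΛ : ∀ y ∉ Λ, ν y = 0) (hν : ∑' y, ν y ≠ ∞)
    (hpot : ∀ y, ∑' x, K x y * ν x ≤ 1) :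
    ∑' y, ν y ≤ capK K Λ := by
  set T := ∑' y, ν y
  rcases eq_or_ne T 0 with hT0 | hT0
  · simp [hT0]
  set μ : Y → ℝ≥0∞ := fun x => T⁻¹ * ν x
  have hμ : ∑' y, μ y = 1 := by rw [ENNReal.tsum_mul_left, ENNReal.inv_mul_cancel hT0 hν]
  have henergy : ∑' x, ∑' y, K x y * μ x * μ y ≤ T⁻¹ :=
    calc ∑' x, ∑' y, K x y * μ x * μ y
        = ∑' y, μ y * T⁻¹ * ∑' x, K x y * ν x := by
          rw [ENNReal.tsum_comm]
          congr 1 with y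
          rw [← ENNReal.tsum_mul_left]
          congr 1 with x
          ring
      _ ≤ ∑' y, μ y * T⁻¹ * 1 := by gcongr with y; exact hpot y
      _ = T⁻¹ := by simp only [mul_one]; rw [ENNReal.tsum_mul_right, hμ, one_mul]
  calc T = T⁻¹⁻¹ := (inv_inv T).symm
    _ ≤ capK K Λ := ENNReal.inv_le_inv.mpr <|
        (iInf_le _ ⟨μ, hμ, fun y hy => by simp [μ, hνΛ y hy]⟩).trans henergy

theorem stmt0_general
    (Y : Type*) [Countable Y] [MeasurableSpace Y] [MeasurableSingletonClass Y]
    (p : Y → Y → ℝ≥0∞)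
    (P : Y → Measure (ℕ → Y)) (hprob : ∀ x, IsProbabilityMeasure (P x))
    (hcyl : ∀ (x : Y) (f : ℕ → Y) (n : ℕ),
      P x {ω | ∀ i ≤ n, ω i = f i} =
        (if f 0 = x then 1 else 0) * ∏ i ∈ Finset.range n, p (f i) (f (i + 1)))
    (ρ : Y)
    (G : Y → Y → ℝ≥0∞) (hGdef : ∀ x y, G x y = ∑' n : ℕ, P x {ω | ω n = y})
    (K : Y → Y → ℝ≥0∞) (hK : ∀ x y, K x y = G x y / G ρ y)
    (Λ : Set Y) :
    P ρ {ω | ∃ n, ω n ∈ Λ} ≤ capK K Λ := by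
  obtain rfl : G = greenFn P := funext₂ hGdef
  rw [← tsum_hittingDist]
  refine tsum_le_capK_of_potential_le_one K Λ _
    (fun x hx => by simp [hittingDist, firstHit_of_notMem Λ hx]) ?_ fun y => ?_
  · rw [tsum_hittingDist]
    exact measure_ne_top (P ρ) _
  calc ∑' x, K x y * hittingDist Λ (P ρ) x
      = (∑' x, hittingDist Λ (P ρ) x * greenFn P x y) / greenFn P ρ y := by
        simp only [hK, div_eq_mul_inv, ← ENNReal.tsum_mul_right]
        congr 1 with x
        ring
    _ ≤ greenFn P ρ y / greenFn P ρ y := by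
        gcongr
        exact HasCylinderLaw.tsum_hittingDist_mul_greenFn_le hcyl Λ ρ y
    _ ≤ 1 := ENNReal.div_self_le_one

/-- Upper bound: the probability that a transient Markov chain started at `ρ`
ever visits `Λ` is at most the Martin capacity of `Λ`. -/
theorem stmt0
    (Y : Type*) [Countable Y] [MeasurableSpace Y] [MeasurableSingletonClass Y]
    (p : Y → Y → ℝ≥0∞) (hp : ∀ x, ∑' y, p x y = 1)
    (P : Y → Measure (ℕ → Y)) (hprob : ∀ x, IsProbabilityMeasure (P x))
    (hcyl : ∀ (x : Y) (f : ℕ → Y) (n : ℕ),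
      P x {ω | ∀ i ≤ n, ω i = f i} =
        (if f 0 = x then 1 else 0) * ∏ i ∈ Finset.range n, p (f i) (f (i + 1)))
    (ρ : Y)
    (G : Y → Y → ℝ≥0∞) (hGdef : ∀ x y, G x y = ∑' n : ℕ, P x {ω | ω n = y})
    (hGfin : ∀ x y, G x y < ∞)
    (K : Y → Y → ℝ≥0∞) (hK : ∀ x y, K x y = G x y / G ρ y)
    (Λ : Set Y) :
    P ρ {ω | ∃ n, ω n ∈ Λ} ≤ capK K Λ :=
  stmt0_general Y p P hprob hcyl ρ G hGdef K hK Λ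
end

section
/- Let (X_n) be a Markov chain started at ρ with Green function G and Martin kernel K(x,y) = G(x,y)/G(ρ,y), and let μ be a probability measure on Λ with positive finite G(ρ,·) on Λ. Define Z = ∫_Λ G(ρ,y)^{-1} Σ_{n≥0} 1{X_n = y} dμ(y). Then E_ρ[Z²] ≤ 2·I_K(μ), where I_K(μ) = ∫∫ K(x,y) dμ(x)dμ(y). -/
/-!
Write `Z = ∑ y, a y * N y` with `a y = μ y / G(ρ, y)` and `N y` the number of visits to `y`, so
`E_ρ[Z²] = ∑ x y, a x * a y * E_ρ[N x * N y]`. The product `N x * N y` counts pairs of times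
`(m, n)` with `X_m = x`, `X_n = y`; splitting into `m ≤ n` and `n ≤ m` and using the Markov property
`P_ρ(X_m = x, X_{m+k} = y) = P_ρ(X_m = x) P_x(X_k = y)` gives
`E_ρ[N x * N y] ≤ G(ρ,x) G(x,y) + G(ρ,y) G(y,x)`. By symmetry the double sum is at most
`2 ∑ x y, a x * a y * G(ρ,x) G(x,y) ≤ 2 ∑ x y, K(x,y) μ x μ y`.

The Markov property follows by induction on `m` from the first-step decomposition: the law of the
shifted path under `P x` is `∑ c, p x c • P c`, since both agree on the cylinders
`{ω | ∀ i ≤ n, ω i = f i}`, which determine a finite measure on `ℕ → Y`.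
-/

open MeasureTheory ENNReal
open scoped Classical

namespace ENNReal

theorem tsum_ite_le_eq_tsum_add (m : ℕ) (g : ℕ → ℝ≥0∞) :
    ∑' n, (if m ≤ n then g n else 0) = ∑' k, g (m + k) := by
  rw [← (add_right_injective m).tsum_eq]
  · simp
  · intro n hn
    exact ⟨n - m, by simp_all⟩

theorem tsum_tsum_le_tsum_tsum_add_add (F : ℕ → ℕ → ℝ≥0∞) :
    ∑' m, ∑' n, F m n ≤ ∑' m, ∑' k, F m (m + k) + ∑' n, ∑' k, F (n + k) n := by
  calc ∑' m, ∑' n, F m n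
      ≤ ∑' m, ∑' n, ((if m ≤ n then F m n else 0) + (if n ≤ m then F m n else 0)) := by
        refine ENNReal.tsum_le_tsum fun m => ENNReal.tsum_le_tsum fun n => ?_
        rcases le_total m n with h | h <;> simp [h]
    _ = ∑' m, ∑' n, (if m ≤ n then F m n else 0) + ∑' n, ∑' m, (if n ≤ m then F m n else 0) := by
        simp_rw [ENNReal.tsum_add]
        rw [ENNReal.tsum_comm (f := fun m n => if n ≤ m then F m n else 0)]
    _ = ∑' m, ∑' k, F m (m + k) + ∑' n, ∑' k, F (n + k) n := by
        simp_rw [tsum_ite_le_eq_tsum_add]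

theorem tsum_tsum_mul_add_swap {ι : Type*} (a : ι → ℝ≥0∞) (f : ι → ι → ℝ≥0∞) :
    ∑' x, ∑' y, a x * a y * (f x y + f y x) = 2 * ∑' x, ∑' y, a x * a y * f x y := by
  simp_rw [mul_add, ENNReal.tsum_add]
  rw [ENNReal.tsum_comm (f := fun x y => a x * a y * f y x), two_mul]
  simp_rw [mul_comm (a _) (a _)]

end ENNReal

theorem lintegral_tsum_mul_sq {α ι : Type*} [MeasurableSpace α] [Countable ι] (μ : Measure α)
    (a : ι → ℝ≥0∞) {N : ι → α → ℝ≥0∞} (hN : ∀ i, Measurable (N i)) :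
    ∫⁻ ω, (∑' i, a i * N i ω) ^ 2 ∂μ = ∑' i, ∑' j, a i * a j * ∫⁻ ω, N i ω * N j ω ∂μ := by
  have hsq (ω : α) : (∑' i, a i * N i ω) ^ 2 = ∑' i, ∑' j, a i * a j * (N i ω * N j ω) := by
    simp_rw [sq, ← ENNReal.tsum_mul_right, ← ENNReal.tsum_mul_left, mul_mul_mul_comm]
  have hm (i j : ι) : Measurable fun ω => a i * a j * (N i ω * N j ω) :=
    ((hN i).mul (hN j)).const_mul _
  simp_rw [hsq]
  rw [lintegral_tsum fun i => (Measurable.tsum (hm i)).aemeasurable]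
  refine tsum_congr fun i => ?_
  rw [lintegral_tsum fun j => (hm i j).aemeasurable]
  exact tsum_congr fun j => lintegral_const_mul _ ((hN i).mul (hN j))

namespace MarkovChain

variable {Y : Type*} [MeasurableSpace Y]

theorem measurableSet_setOf_forall_le_eq [MeasurableSingletonClass Y] (n : ℕ) (f : ℕ → Y) :
    MeasurableSet {ω : ℕ → Y | ∀ i ≤ n, ω i = f i} := by
  simp only [Set.ofPred_forall]
  exact .iInter fun i => .iInter fun _ => measurable_pi_apply i (measurableSet_singleton _)

theorem measure_ext_of_initialCylinder_eq [Countable Y] [MeasurableSingletonClass Y]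
    {μ ν : Measure (ℕ → Y)} [IsFiniteMeasure μ]
    (h : ∀ (n : ℕ) (f : ℕ → Y),
      μ {ω | ∀ i ≤ n, ω i = f i} = ν {ω | ∀ i ≤ n, ω i = f i}) : μ = ν := by
  have hIic (n : ℕ) : μ.map (Finset.Iic n).restrict = ν.map (Finset.Iic n).restrict := by
    refine Measure.ext_of_singleton fun v => ?_
    let f : ℕ → Y := fun i => v ⟨min i n, Finset.mem_Iic.2 (min_le_right i n)⟩
    have hv : (Finset.Iic n).restrict ⁻¹' ({v} : Set (Finset.Iic n → Y)) =
        {ω | ∀ i ≤ n, ω i = f i} := by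
      ext ω
      simp only [Set.mem_preimage, Set.mem_singleton_iff, funext_iff, Subtype.forall,
        Finset.mem_Iic, Finset.restrict, Set.mem_ofPred_eq, f]
      refine forall₂_congr fun i hi => ?_
      simp [min_eq_left hi]
    rw [Measure.map_apply (Finset.measurable_restrict _) (measurableSet_singleton v),
      Measure.map_apply (Finset.measurable_restrict _) (measurableSet_singleton v), hv, h]
  refine IsProjectiveLimit.unique (P := fun I => μ.map I.restrict) (fun _ => rfl) fun I => ?_
  have hI : I ⊆ Finset.Iic (I.sup id) := fun i hi => Finset.mem_Iic.2 (Finset.le_sup (f := id) hi)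
  show ν.map I.restrict = μ.map I.restrict
  rw [← Finset.restrict₂_comp_restrict hI,
    ← Measure.map_map (Finset.measurable_restrict₂ hI) (Finset.measurable_restrict _),
    ← Measure.map_map (Finset.measurable_restrict₂ hI) (Finset.measurable_restrict _), hIic]

def IsMarkovFamily (p : Y → Y → ℝ≥0∞) (P : Y → Measure (ℕ → Y)) : Prop :=
  ∀ (x : Y) (f : ℕ → Y) (n : ℕ), P x {ω | ∀ i ≤ n, ω i = f i} =
    (if f 0 = x then 1 else 0) * ∏ i ∈ Finset.range n, p (f i) (f (i + 1))

def shift (ω : ℕ → Y) : ℕ → Y := fun n => ω (n + 1)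

theorem measurable_shift : Measurable (shift : (ℕ → Y) → ℕ → Y) :=
  measurable_pi_lambda _ fun n => measurable_pi_apply (n + 1)

theorem measurableSet_apply_eq [MeasurableSingletonClass Y] (n : ℕ) (y : Y) :
    MeasurableSet {ω : ℕ → Y | ω n = y} :=
  (measurableSet_singleton y).preimage (measurable_pi_apply n)

noncomputable def visits (y : Y) (ω : ℕ → Y) : ℝ≥0∞ := ∑' n, if ω n = y then 1 else 0

theorem measurable_visits [MeasurableSingletonClass Y] (y : Y) : Measurable (visits y) :=
  .tsum fun n => .ite (measurableSet_apply_eq n y) measurable_const measurable_const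

theorem lintegral_visits_mul_visits [MeasurableSingletonClass Y] (ν : Measure (ℕ → Y)) (x y : Y) :
    ∫⁻ ω, visits x ω * visits y ω ∂ν = ∑' m, ∑' n, ν {ω | ω m = x ∧ ω n = y} := by
  have hS (m n : ℕ) : MeasurableSet {ω : ℕ → Y | ω m = x ∧ ω n = y} :=
    (measurableSet_apply_eq m x).inter (measurableSet_apply_eq n y)
  have hprod (ω : ℕ → Y) : visits x ω * visits y ω =
      ∑' m, ∑' n, {ω : ℕ → Y | ω m = x ∧ ω n = y}.indicator 1 ω := by
    simp_rw [visits, ← ENNReal.tsum_mul_right, ← ENNReal.tsum_mul_left, ite_zero_mul_ite_zero,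
      mul_one, Set.indicator_apply, Set.mem_ofPred_eq, Pi.one_apply]
  simp_rw [hprod]
  rw [lintegral_tsum fun m => (Measurable.tsum fun n =>
    measurable_one.indicator (hS m n)).aemeasurable]
  refine tsum_congr fun m => ?_
  rw [lintegral_tsum fun n => (measurable_one.indicator (hS m n)).aemeasurable]
  exact tsum_congr fun n => lintegral_indicator_one (hS m n)

noncomputable def green (P : Y → Measure (ℕ → Y)) (x y : Y) : ℝ≥0∞ := ∑' n, P x {ω | ω n = y}

namespace IsMarkovFamily

variable {p : Y → Y → ℝ≥0∞} {P : Y → Measure (ℕ → Y)}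

theorem measure_apply_zero_eq (hP : IsMarkovFamily p P) (x : Y) : P x {ω | ω 0 = x} = 1 := by
  simpa using hP x (fun _ => x) 0

theorem ae_apply_zero_eq [MeasurableSingletonClass Y] (hP : IsMarkovFamily p P) (x : Y)
    [IsProbabilityMeasure (P x)] : ∀ᵐ ω ∂P x, ω 0 = x :=
  (prob_compl_eq_zero_iff (measurableSet_apply_eq 0 x)).2 (hP.measure_apply_zero_eq x)

theorem map_shift [MeasurableSingletonClass Y] [Countable Y] (hP : IsMarkovFamily p P) (x : Y)
    [IsProbabilityMeasure (P x)] : (P x).map shift = Measure.sum fun c => p x c • P c := by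
  refine measure_ext_of_initialCylinder_eq fun n f => ?_
  let g : ℕ → Y := fun i => Nat.casesOn i x f
  have hg : shift ⁻¹' {ω | ∀ i ≤ n, ω i = f i} =ᵐ[P x] {ω | ∀ i ≤ n + 1, ω i = g i} := by
    filter_upwards [hP.ae_apply_zero_eq x] with ω hω
    simp only [eq_iff_iff]
    constructor
    · rintro h (_ | i) hi
      exacts [hω, h i (by omega)]
    · exact fun h i hi => h (i + 1) (by omega)
  rw [Measure.map_apply measurable_shift (measurableSet_setOf_forall_le_eq n f),
    Measure.sum_apply _ (measurableSet_setOf_forall_le_eq n f), measure_congr hg, hP,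
    Finset.prod_range_succ']
  simp only [Measure.smul_apply, smul_eq_mul, hP _ f n, g]
  simp [mul_comm]

theorem measure_shift_preimage [MeasurableSingletonClass Y] [Countable Y]
    (hP : IsMarkovFamily p P) (x : Y) [IsProbabilityMeasure (P x)] {E : Set (ℕ → Y)}
    (hE : MeasurableSet E) : P x (shift ⁻¹' E) = ∑' c, p x c * P c E := by
  rw [← Measure.map_apply measurable_shift hE, hP.map_shift, Measure.sum_apply _ hE]
  rfl

theorem measure_apply_eq_and_apply_add_eq [MeasurableSingletonClass Y] [Countable Y]
    (hP : IsMarkovFamily p P) [∀ x, IsProbabilityMeasure (P x)] (m k : ℕ) (x a b : Y) :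
    P x {ω | ω m = a ∧ ω (m + k) = b} = P x {ω | ω m = a} * P a {ω | ω k = b} := by
  induction m generalizing x with
  | zero =>
    by_cases hax : a = x
    · subst hax
      have hk : {ω : ℕ → Y | ω 0 = a ∧ ω (0 + k) = b} =ᵐ[P a] {ω | ω k = b} := by
        filter_upwards [hP.ae_apply_zero_eq a] with ω hω
        change (ω 0 = a ∧ ω (0 + k) = b) = (ω k = b)
        simp [hω]
      rw [measure_congr hk, hP.measure_apply_zero_eq, one_mul]
    · have h0 : P x {ω | ω 0 = a} = 0 :=
        measure_mono_null (fun ω hω h => hax (hω.symm.trans h)) (ae_iff.1 (hP.ae_apply_zero_eq x))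
      rw [measure_mono_null (fun ω hω => hω.1) h0, h0, zero_mul]
  | succ m ih =>
    have hshift : {ω : ℕ → Y | ω (m + 1) = a ∧ ω (m + 1 + k) = b} =
        shift ⁻¹' {ω | ω m = a ∧ ω (m + k) = b} := by
      ext ω
      simp [shift, add_right_comm]
    have hE : MeasurableSet {ω : ℕ → Y | ω m = a ∧ ω (m + k) = b} :=
      (measurableSet_apply_eq m a).inter (measurableSet_apply_eq _ b)
    rw [hshift, show {ω : ℕ → Y | ω (m + 1) = a} = shift ⁻¹' {ω | ω m = a} from rfl,
      hP.measure_shift_preimage x hE,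
      hP.measure_shift_preimage x (measurableSet_apply_eq m a), ← ENNReal.tsum_mul_right]
    simp only [ih, mul_assoc]

theorem tsum_tsum_measure_apply_eq_and_apply_add_eq [MeasurableSingletonClass Y] [Countable Y]
    (hP : IsMarkovFamily p P) [∀ x, IsProbabilityMeasure (P x)] (x a b : Y) :
    ∑' m, ∑' k, P x {ω | ω m = a ∧ ω (m + k) = b} = green P x a * green P a b := by
  rw [green, green, ← ENNReal.tsum_mul_right]
  refine tsum_congr fun m => ?_
  rw [← ENNReal.tsum_mul_left]
  exact tsum_congr fun k => hP.measure_apply_eq_and_apply_add_eq m k x a b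

theorem lintegral_visits_mul_visits_le [MeasurableSingletonClass Y] [Countable Y]
    (hP : IsMarkovFamily p P) [∀ x, IsProbabilityMeasure (P x)] (ρ x y : Y) :
    ∫⁻ ω, visits x ω * visits y ω ∂P ρ ≤
      green P ρ x * green P x y + green P ρ y * green P y x := by
  rw [lintegral_visits_mul_visits, ← hP.tsum_tsum_measure_apply_eq_and_apply_add_eq,
    ← hP.tsum_tsum_measure_apply_eq_and_apply_add_eq]
  refine (ENNReal.tsum_tsum_le_tsum_tsum_add_add _).trans_eq ?_
  congr 1
  simp_rw [and_comm]

end IsMarkovFamily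

end MarkovChain

open MarkovChain in
theorem stmt5_general
    (Y : Type*) [Countable Y] [MeasurableSpace Y] [MeasurableSingletonClass Y]
    (p : Y → Y → ℝ≥0∞)
    (P : Y → Measure (ℕ → Y)) (hprob : ∀ x, IsProbabilityMeasure (P x))
    (hcyl : ∀ (x : Y) (f : ℕ → Y) (n : ℕ),
      P x {ω | ∀ i ≤ n, ω i = f i} =
        (if f 0 = x then 1 else 0) * ∏ i ∈ Finset.range n, p (f i) (f (i + 1)))
    (ρ : Y)
    (G : Y → Y → ℝ≥0∞) (hGdef : ∀ x y, G x y = ∑' n : ℕ, P x {ω | ω n = y})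
    (K : Y → Y → ℝ≥0∞) (hK : ∀ x y, K x y = G x y / G ρ y)
    (μ : Y → ℝ≥0∞)
    (Z : (ℕ → Y) → ℝ≥0∞)
    (hZ : ∀ ω, Z ω = ∑' y, μ y * (G ρ y)⁻¹ * ∑' n : ℕ, (if ω n = y then 1 else 0)) :
    ∫⁻ ω, (Z ω) ^ 2 ∂(P ρ) ≤ 2 * ∑' x, ∑' y, K x y * μ x * μ y := by
  have hP : IsMarkovFamily p P := hcyl
  obtain rfl : G = green P := funext₂ hGdef
  set a : Y → ℝ≥0∞ := fun y => μ y * (green P ρ y)⁻¹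
  have hterm (x y : Y) : a x * a y * (green P ρ x * green P x y) ≤ K x y * μ x * μ y := by
    calc a x * a y * (green P ρ x * green P x y)
        = ((green P ρ x)⁻¹ * green P ρ x) * (K x y * μ x * μ y) := by
          rw [hK, ENNReal.div_eq_inv_mul]; ring
      _ ≤ K x y * μ x * μ y := mul_le_of_le_one_left' (ENNReal.inv_mul_le_one _)
  calc ∫⁻ ω, Z ω ^ 2 ∂P ρ = ∫⁻ ω, (∑' y, a y * visits y ω) ^ 2 ∂P ρ := by simp_rw [hZ]; rfl
    _ = ∑' x, ∑' y, a x * a y * ∫⁻ ω, visits x ω * visits y ω ∂P ρ :=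
        lintegral_tsum_mul_sq _ _ measurable_visits
    _ ≤ ∑' x, ∑' y, a x * a y * (green P ρ x * green P x y + green P ρ y * green P y x) := by
        gcongr with x y
        exact hP.lintegral_visits_mul_visits_le ρ x y
    _ = 2 * ∑' x, ∑' y, a x * a y * (green P ρ x * green P x y) :=
        ENNReal.tsum_tsum_mul_add_swap _ _
    _ ≤ 2 * ∑' x, ∑' y, K x y * μ x * μ y := by
        gcongr 2 * ∑' x, ∑' y, ?_ with x y
        exact hterm x y

/-- Second moment bound: for `Z = ∫_Λ G(ρ,y)⁻¹ Σ_n 1{X_n = y} dμ(y)`, one has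
`E_ρ[Z²] ≤ 2 I_K(μ)`, where `K(x,y) = G(x,y)/G(ρ,y)` is the Martin kernel. -/
theorem stmt5
    (Y : Type*) [Countable Y] [MeasurableSpace Y] [MeasurableSingletonClass Y]
    (p : Y → Y → ℝ≥0∞) (hp : ∀ x, ∑' y, p x y = 1)
    (P : Y → Measure (ℕ → Y)) (hprob : ∀ x, IsProbabilityMeasure (P x))
    (hcyl : ∀ (x : Y) (f : ℕ → Y) (n : ℕ),
      P x {ω | ∀ i ≤ n, ω i = f i} =
        (if f 0 = x then 1 else 0) * ∏ i ∈ Finset.range n, p (f i) (f (i + 1)))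
    (ρ : Y)
    (G : Y → Y → ℝ≥0∞) (hGdef : ∀ x y, G x y = ∑' n : ℕ, P x {ω | ω n = y})
    (K : Y → Y → ℝ≥0∞) (hK : ∀ x y, K x y = G x y / G ρ y)
    (Λ : Set Y)
    (hGpos : ∀ y ∈ Λ, 0 < G ρ y) (hGfin : ∀ y ∈ Λ, G ρ y < ∞)
    (μ : Y → ℝ≥0∞) (hμ1 : ∑' y, μ y = 1) (hμ0 : ∀ y ∉ Λ, μ y = 0)
    (Z : (ℕ → Y) → ℝ≥0∞)
    (hZ : ∀ ω, Z ω = ∑' y, μ y * (G ρ y)⁻¹ * ∑' n : ℕ, (if ω n = y then 1 else 0)) :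
    ∫⁻ ω, (Z ω) ^ 2 ∂(P ρ) ≤ 2 * ∑' x, ∑' y, K x y * μ x * μ y :=
  stmt5_general Y p P hprob hcyl ρ G hGdef K hK μ Z hZ
end

section
/- Let μ be a probability measure on a countable group Y whose support generates Y, and let (S_n) be the associated random walk (S_n S_{n-1}^{-1} ~ μ, S_0 = identity). If every bounded μ-harmonic function on Y is constant, then for every subset Λ ⊆ Y, the probability P[S_n ∈ Λ infinitely often] is either 0 or 1. -/
/-!
The hitting probability `h x = P[S_n x ∈ Λ i.o.]` is `μ`-harmonic by the Markov property at
time `1`, hence constant by the Liouville hypothesis. Since `S_{m+k} = S'_k S_m` for the walk `S'`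
driven by the increments after time `m`, the Markov property at time `m` gives
`P(A ∩ E) = ∑_g P(A ∩ {S_m = g}) h g = h 1 · P(A)` for `E = {S_n ∈ Λ i.o.}` and every event `A`
determined by `ξ_0, …, ξ_{m-1}`. So `E` is independent of `σ(ξ)`, which contains `E`, and
`P(E) = P(E)²`.
-/

open MeasureTheory ProbabilityTheory Filter ENNReal

theorem Nat.infinite_setOf_add_iff {p : ℕ → Prop} (m : ℕ) :
    {k | p (m + k)}.Infinite ↔ {n | p n}.Infinite := by
  simp_rw [← Nat.frequently_atTop_iff_infinite, add_comm m]
  conv_rhs => rw [← map_add_atTop_eq_nat m]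
  exact frequently_map.symm

theorem tsum_measure_inter_fiber {Y Ω : Type*} [Countable Y] [MeasurableSpace Y]
    [MeasurableSingletonClass Y] {mΩ : MeasurableSpace Ω} {P : Measure Ω} {f : Ω → Y}
    (hf : Measurable f) {A : Set Ω} (hA : MeasurableSet A) : ∑' g, P (A ∩ {ω | f ω = g}) = P A := by
  change ∑' g, P (A ∩ f ⁻¹' {g}) = P A
  rw [← measure_iUnion (fun g g' hgg' => Disjoint.mono Set.inter_subset_right Set.inter_subset_right
      ((Set.disjoint_singleton.2 hgg').preimage f))
    fun g => hA.inter (hf (measurableSet_singleton g)), ← Set.inter_iUnion,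
    ← Set.preimage_iUnion, Set.iUnion_of_singleton, Set.preimage_univ, Set.inter_univ]

namespace RandomWalk

section Paths

variable {Y : Type*} [Group Y]

def leftPartialProd (u : ℕ → Y) : ℕ → Y
  | 0 => 1
  | n + 1 => u n * leftPartialProd u n

theorem leftPartialProd_add (u : ℕ → Y) (m k : ℕ) :
    leftPartialProd u (m + k) = leftPartialProd (fun i => u (m + i)) k * leftPartialProd u m := by
  induction k with
  | zero => simp [leftPartialProd]
  | succ k ih => rw [← add_assoc, leftPartialProd, ih, leftPartialProd, mul_assoc]

def infOftenVisits (Λ : Set Y) (x : Y) : Set (ℕ → Y) :=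
  {u | {n | leftPartialProd u n * x ∈ Λ}.Infinite}

theorem shift_mem_infOftenVisits_iff {Λ : Set Y} {x : Y} (u : ℕ → Y) (m : ℕ) :
    (fun i => u (m + i)) ∈ infOftenVisits Λ (leftPartialProd u m * x) ↔
      u ∈ infOftenVisits Λ x := by
  simp only [infOftenVisits, Set.mem_ofPred_eq, ← mul_assoc, ← leftPartialProd_add]
  exact Nat.infinite_setOf_add_iff (p := fun n => leftPartialProd u n * x ∈ Λ) m

variable [Countable Y] [MeasurableSpace Y] [MeasurableSingletonClass Y]

theorem measurable_leftPartialProd (n : ℕ) : Measurable fun u : ℕ → Y => leftPartialProd u n := by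
  induction n with
  | zero => exact measurable_const
  | succ n ih => exact (measurable_pi_apply n).mul ih

theorem measurableSet_infOftenVisits (Λ : Set Y) (x : Y) :
    MeasurableSet (infOftenVisits Λ x) := by
  have h : infOftenVisits Λ x = ⋂ N : ℕ, ⋃ n ≥ N, {u | leftPartialProd u n * x ∈ Λ} := by
    ext u
    simp only [infOftenVisits, Set.mem_ofPred_eq, ← Nat.frequently_atTop_iff_infinite,
      frequently_atTop, Set.mem_iInter, Set.mem_iUnion, exists_prop]
  rw [h]
  exact .iInter fun N => .biUnion (Set.to_countable _) fun n _ =>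
    (measurable_leftPartialProd n).mul_const x (Set.to_countable Λ).measurableSet

end Paths

section Past

variable {Y Ω : Type*} [MeasurableSpace Y] {mΩ : MeasurableSpace Ω} {P : Measure Ω} {ξ : ℕ → Ω → Y}

abbrev past (ξ : ℕ → Ω → Y) (m : ℕ) : MeasurableSpace Ω :=
  ⨆ i ∈ Set.Iio m, MeasurableSpace.comap (ξ i) inferInstance

theorem measurable_past {i m : ℕ} (hi : i < m) : Measurable[past ξ m] (ξ i) :=
  measurable_iff_comap_le.2 <|
    le_iSup₂ (f := fun j (_ : j ∈ Set.Iio m) => MeasurableSpace.comap (ξ j) inferInstance) i hi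

theorem monotone_past : Monotone (past ξ) := fun _ _ h =>
  biSup_mono fun _ hi => lt_of_lt_of_le hi h

theorem past_le (hmeas : ∀ n, Measurable (ξ n)) (m : ℕ) : past ξ m ≤ mΩ :=
  iSup₂_le fun i _ => (hmeas i).comap_le

theorem indep_past_comap_shift (hmeas : ∀ n, Measurable (ξ n)) (hindep : iIndepFun ξ P)
    (m : ℕ) :
    Indep (past ξ m) (MeasurableSpace.comap (fun ω k => ξ (m + k) ω) inferInstance) P := by
  let future := ⨆ i ∈ Set.Ici m, MeasurableSpace.comap (ξ i) inferInstance
  have hshift : Measurable[future] fun ω k => ξ (m + k) ω :=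
    @measurable_pi_lambda _ _ _ future _ _ fun k => measurable_iff_comap_le.2 <|
      le_iSup₂ (f := fun j (_ : j ∈ Set.Ici m) => MeasurableSpace.comap (ξ j) inferInstance)
        (m + k) (Nat.le_add_right m k)
  exact indep_of_indep_of_le_right (indep_iSup_of_disjoint (fun i => (hmeas i).comap_le)
    hindep (Set.Iio_disjoint_Ici le_rfl)) hshift.comap_le

theorem map_shift_eq_map (hmeas : ∀ n, Measurable (ξ n)) (hindep : iIndepFun ξ P)
    (hident : ∀ n, P.map (ξ n) = P.map (ξ 0)) (m : ℕ) :
    P.map (fun ω k => ξ (m + k) ω) = P.map (fun ω k => ξ k ω) := by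
  rw [(hindep.precomp (add_right_injective m)).map_fun_eq_infinitePi_map (fun k => hmeas _),
    hindep.map_fun_eq_infinitePi_map hmeas]
  simp_rw [hident]

end Past

section Walk

variable {Y Ω : Type*} [Group Y] {mΩ : MeasurableSpace Ω} {P : Measure Ω} {ξ : ℕ → Ω → Y}

def probInfOftenVisits (P : Measure Ω) (ξ : ℕ → Ω → Y) (Λ : Set Y) (x : Y) : ℝ≥0∞ :=
  P {ω | (fun k => ξ k ω) ∈ infOftenVisits Λ x}

theorem probInfOftenVisits_le_one [IsProbabilityMeasure P] (Λ : Set Y) (x : Y) :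
    probInfOftenVisits P ξ Λ x ≤ 1 :=
  prob_le_one

theorem probInfOftenVisits_ne_top [IsProbabilityMeasure P] (Λ : Set Y) (x : Y) :
    probInfOftenVisits P ξ Λ x ≠ ⊤ :=
  measure_ne_top P _

variable [Countable Y] [MeasurableSpace Y] [MeasurableSingletonClass Y]

theorem measurable_past_leftPartialProd (m : ℕ) :
    Measurable[past ξ m] fun ω => leftPartialProd (fun k => ξ k ω) m := by
  suffices ∀ n ≤ m, Measurable[past ξ m] fun ω => leftPartialProd (fun k => ξ k ω) n from
    this m le_rfl
  intro n hn
  induction n with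
  | zero => exact measurable_const
  | succ n ih => exact (measurable_past hn).mul (ih (Nat.le_of_succ_le hn))

theorem measure_inter_infOftenVisits (hmeas : ∀ n, Measurable (ξ n)) (hindep : iIndepFun ξ P)
    (hident : ∀ n, P.map (ξ n) = P.map (ξ 0)) {m : ℕ} {A : Set Ω}
    (hA : MeasurableSet[past ξ m] A) (Λ : Set Y) (x : Y) :
    P (A ∩ {ω | (fun k => ξ k ω) ∈ infOftenVisits Λ x}) =
      ∑' g, P (A ∩ {ω | leftPartialProd (fun k => ξ k ω) m = g}) *
        probInfOftenVisits P ξ Λ (g * x) := by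
  set W := fun ω => leftPartialProd (fun k => ξ k ω) m
  set shift := fun ω k => ξ (m + k) ω
  have hW : Measurable[past ξ m] W := measurable_past_leftPartialProd m
  have hshift : Measurable shift := measurable_pi_lambda _ fun k => hmeas (m + k)
  have hfiber : ∀ g, MeasurableSet[past ξ m] (A ∩ W ⁻¹' {g}) :=
    fun g => hA.inter (hW (measurableSet_singleton g))
  have hsplit : A ∩ {ω | (fun k => ξ k ω) ∈ infOftenVisits Λ x} =
      ⋃ g, (A ∩ W ⁻¹' {g}) ∩ shift ⁻¹' infOftenVisits Λ (g * x) := by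
    ext ω
    simp only [Set.mem_inter_iff, Set.mem_iUnion, Set.mem_preimage, Set.mem_singleton_iff,
      Set.mem_ofPred_eq]
    constructor
    · rintro ⟨hωA, hω⟩
      exact ⟨W ω, ⟨hωA, rfl⟩, (shift_mem_infOftenVisits_iff _ m).2 hω⟩
    · rintro ⟨g, ⟨hωA, rfl⟩, hω⟩
      exact ⟨hωA, (shift_mem_infOftenVisits_iff _ m).1 hω⟩
  rw [hsplit, measure_iUnion]
  · refine tsum_congr fun g => ?_
    rw [(Indep_iff _ _ _).1 (indep_past_comap_shift hmeas hindep m) _ _ (hfiber g)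
        ⟨_, measurableSet_infOftenVisits Λ (g * x), rfl⟩,
      ← Measure.map_apply hshift (measurableSet_infOftenVisits Λ _),
      map_shift_eq_map hmeas hindep hident m,
      Measure.map_apply (measurable_pi_lambda _ hmeas) (measurableSet_infOftenVisits Λ _)]
    rfl
  · exact fun g g' hgg' => Disjoint.mono (Set.inter_subset_left.trans Set.inter_subset_right)
      (Set.inter_subset_left.trans Set.inter_subset_right)
      ((Set.disjoint_singleton.2 hgg').preimage W)
  · exact fun g => (past_le hmeas m _ (hfiber g)).inter
      (hshift (measurableSet_infOftenVisits Λ _))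

theorem probInfOftenVisits_eq_tsum (hmeas : ∀ n, Measurable (ξ n)) (hindep : iIndepFun ξ P)
    (hident : ∀ n, P.map (ξ n) = P.map (ξ 0)) (Λ : Set Y) (x : Y) :
    probInfOftenVisits P ξ Λ x =
      ∑' g, P {ω | ξ 0 ω = g} * probInfOftenVisits P ξ Λ (g * x) := by
  simpa [leftPartialProd, probInfOftenVisits] using
    measure_inter_infOftenVisits hmeas hindep hident (m := 1) MeasurableSet.univ Λ x

theorem probInfOftenVisits_eq_zero_or_one (hmeas : ∀ n, Measurable (ξ n))
    (hindep : iIndepFun ξ P) (hident : ∀ n, P.map (ξ n) = P.map (ξ 0)) (Λ : Set Y)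
    (hconst : ∀ x, probInfOftenVisits P ξ Λ x = probInfOftenVisits P ξ Λ 1) :
    probInfOftenVisits P ξ Λ 1 = 0 ∨ probInfOftenVisits P ξ Λ 1 = 1 := by
  have := hindep.isProbabilityMeasure
  set E := {ω | (fun k => ξ k ω) ∈ infOftenVisits Λ 1}
  have hpath : Measurable[⨆ m, past ξ m] fun ω k => ξ k ω :=
    @measurable_pi_lambda _ _ _ (⨆ m, past ξ m) _ _ fun k =>
      (measurable_past k.lt_succ_self).mono (le_iSup (past ξ) (k + 1)) le_rfl
  have hE : MeasurableSet[⨆ m, past ξ m] E := hpath (measurableSet_infOftenVisits Λ 1)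
  have hE_le : MeasurableSpace.generateFrom {E} ≤ ⨆ m, past ξ m :=
    MeasurableSpace.generateFrom_le fun t ht => Set.mem_singleton_iff.1 ht ▸ hE
  have hiSup_le : ⨆ m, past ξ m ≤ mΩ := iSup_le (past_le hmeas)
  have hindep_past : ∀ m, Indep (past ξ m) (MeasurableSpace.generateFrom {E}) P := fun m =>
    IndepSets.indep (p1 := {A | MeasurableSet[past ξ m] A}) (past_le hmeas m)
      (hE_le.trans hiSup_le) (@MeasurableSpace.isPiSystem_measurableSet Ω (past ξ m))
      (.singleton E) (@MeasurableSpace.generateFrom_measurableSet Ω (past ξ m)).symm rfl <|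
      (IndepSets_iff _ _ _).2 fun A t hA ht => by
        rw [Set.mem_singleton_iff.1 ht, measure_inter_infOftenVisits hmeas hindep hident hA]
        change _ = P A * probInfOftenVisits P ξ Λ 1
        simp_rw [mul_one, hconst, ENNReal.tsum_mul_right]
        rw [tsum_measure_inter_fiber ((measurable_past_leftPartialProd m).mono
          (past_le hmeas m) le_rfl) (past_le hmeas m _ hA)]
  exact measure_eq_zero_or_one_of_indepSet_self <| indep_of_indep_of_le_left
    (indep_iSup_of_directed_le hindep_past (past_le hmeas) (hE_le.trans hiSup_le)
      monotone_past.directed_le) hE_le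

end Walk

end RandomWalk

open RandomWalk in
theorem stmt9_general
    (Y : Type*) [Countable Y] [Group Y] [MeasurableSpace Y] [MeasurableSingletonClass Y]
    (μ : Y → ℝ≥0∞)
    (Ω : Type*) [MeasurableSpace Ω] (P : Measure Ω) [IsProbabilityMeasure P]
    (ξ : ℕ → Ω → Y) (hmeas : ∀ n, Measurable (ξ n))
    (hlaw : ∀ n y, P {ω | ξ n ω = y} = μ y)
    (hindep : ProbabilityTheory.iIndepFun ξ P)
    (S : ℕ → Ω → Y) (hS0 : ∀ ω, S 0 ω = 1)
    (hSrec : ∀ n ω, S (n + 1) ω = ξ n ω * S n ω)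
    (hLiouville : ∀ h : Y → ℝ, (∃ C, ∀ x, |h x| ≤ C) →
      (∀ x, h x = ∑' y, (μ y).toReal * h (y * x)) → ∀ x x', h x = h x') :
    ∀ Λ : Set Y, P {ω | {n : ℕ | S n ω ∈ Λ}.Infinite} = 0 ∨
      P {ω | {n : ℕ | S n ω ∈ Λ}.Infinite} = 1 := by
  intro Λ
  have hS : S = fun n ω => leftPartialProd (fun k => ξ k ω) n := by
    funext n ω
    induction n with
    | zero => exact hS0 ω
    | succ n ih => rw [hSrec, ih]; rfl
  have hident : ∀ n, P.map (ξ n) = P.map (ξ 0) := fun n => Measure.ext_iff_singleton.2 fun y => by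
    rw [Measure.map_apply (hmeas n) (measurableSet_singleton y),
      Measure.map_apply (hmeas 0) (measurableSet_singleton y)]
    exact (hlaw n y).trans (hlaw 0 y).symm
  have hconst : ∀ x, probInfOftenVisits P ξ Λ x = probInfOftenVisits P ξ Λ 1 := fun x => by
    refine (ENNReal.toReal_eq_toReal_iff' (probInfOftenVisits_ne_top Λ x)
      (probInfOftenVisits_ne_top Λ 1)).1 <|
      hLiouville (fun x => (probInfOftenVisits P ξ Λ x).toReal) ⟨1, fun x => ?_⟩ (fun x => ?_) x 1
    · rw [abs_of_nonneg ENNReal.toReal_nonneg, ← ENNReal.toReal_one]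
      exact ENNReal.toReal_mono one_ne_top (probInfOftenVisits_le_one Λ x)
    · rw [probInfOftenVisits_eq_tsum hmeas hindep hident Λ x, ENNReal.tsum_toReal_eq]
      · simp_rw [ENNReal.toReal_mul, hlaw 0]
      · exact fun g => ENNReal.mul_ne_top (measure_ne_top P _) (probInfOftenVisits_ne_top Λ _)
  simpa [hS, probInfOftenVisits, infOftenVisits] using
    probInfOftenVisits_eq_zero_or_one hmeas hindep hident Λ hconst

/-- If every bounded `μ`-harmonic function on a countable group `Y` (with `μ`
whose support generates `Y`) is constant, then for every `Λ ⊆ Y` the event that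
the random walk visits `Λ` infinitely often has probability `0` or `1`. -/
theorem stmt9
    (Y : Type*) [Countable Y] [Group Y] [MeasurableSpace Y] [MeasurableSingletonClass Y]
    (μ : Y → ℝ≥0∞) (hμ1 : ∑' y, μ y = 1)
    (hgen : Subgroup.closure {y : Y | μ y ≠ 0} = ⊤)
    (Ω : Type*) [MeasurableSpace Ω] (P : Measure Ω) [IsProbabilityMeasure P]
    (ξ : ℕ → Ω → Y) (hmeas : ∀ n, Measurable (ξ n))
    (hlaw : ∀ n y, P {ω | ξ n ω = y} = μ y)
    (hindep : ProbabilityTheory.iIndepFun ξ P)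
    (S : ℕ → Ω → Y) (hS0 : ∀ ω, S 0 ω = 1)
    (hSrec : ∀ n ω, S (n + 1) ω = ξ n ω * S n ω)
    (hLiouville : ∀ h : Y → ℝ, (∃ C, ∀ x, |h x| ≤ C) →
      (∀ x, h x = ∑' y, (μ y).toReal * h (y * x)) → ∀ x x', h x = h x') :
    ∀ Λ : Set Y, P {ω | {n : ℕ | S n ω ∈ Λ}.Infinite} = 0 ∨
      P {ω | {n : ℕ | S n ω ∈ Λ}.Infinite} = 1 :=
  stmt9_general Y μ Ω P ξ hmeas hlaw hindep S hS0 hSrec hLiouville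
end

section
/- Let μ be a probability measure on a countable group Y whose support generates Y, and let (S_n) be the associated left random walk. If for every Λ ⊆ Y the probability P[S_n ∈ Λ infinitely often] is 0 or 1, then every bounded μ-harmonic function on Y is constant. -/
/-!
Fix `x`. For the filtration generated by the increments, `h (S n * x)` is a bounded martingale
(this is harmonicity plus the independence of `ξ n` from the past), so it converges almost surely.
Applying the zero-one hypothesis to the sets `{z | h (z * x) < q}`, `q` rational, shows that the
limit is an almost sure constant `c`. A bounded martingale with a constant limit is constant, so
`h x = c` and `h (ξ 0 * x) = c` almost surely; since `ξ 0 = y` has positive probability whenever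
`μ y ≠ 0`, we get `h (y * x) = h x`, and `h` is constant because the support of `μ` generates `Y`.
-/

open MeasureTheory ENNReal Filter Topology ProbabilityTheory

def IsHarmonic {Y : Type*} [Mul Y] (μ : Y → ℝ≥0∞) (h : Y → ℝ) : Prop :=
  ∀ x, h x = ∑' y, (μ y).toReal * h (y * x)

theorem eq_of_forall_mul_eq_of_closure_eq_top {Y : Type*} [Group Y] {s : Set Y}
    (hs : Subgroup.closure s = ⊤) {h : Y → ℝ} (hinv : ∀ y ∈ s, ∀ x, h (y * x) = h x)
    (x x' : Y) : h x = h x' := by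
  have key : ∀ g ∈ Subgroup.closure s, ∀ x, h (g * x) = h x := by
    intro g hg
    induction hg using Subgroup.closure_induction with
    | mem y hy => exact hinv y hy
    | one => simp
    | mul g₁ g₂ _ _ h₁ h₂ => intro x; rw [mul_assoc, h₁, h₂]
    | inv g _ hg => intro x; rw [← hg, mul_inv_cancel_left]
  simpa using key (x' * x⁻¹) (hs ▸ Subgroup.mem_top _) x |>.symm

section Increments

variable {Ω α β : Type*} {m mΩ : MeasurableSpace Ω} [MeasurableSpace α] [MeasurableSpace β]

theorem map_restrict_prodMk_eq_prod {P : Measure Ω} [IsFiniteMeasure P] (hm : m ≤ mΩ)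
    {X : Ω → α} {Z : Ω → β} (hX : Measurable X) (hZ : Measurable[m] Z)
    (hind : Indep (MeasurableSpace.comap X inferInstance) m P) {s : Set Ω}
    (hs : MeasurableSet[m] s) :
    (P.restrict s).map (fun ω => (X ω, Z ω)) = (P.map X).prod ((P.restrict s).map Z) := by
  have hZ' : Measurable Z := hZ.mono hm le_rfl
  refine (Measure.prod_eq fun A B hA hB => ?_).symm
  rw [Measure.map_apply (hX.prodMk hZ') (hA.prod hB), Measure.map_apply hX hA,
    Measure.map_apply hZ' hB, Measure.restrict_apply ((hX.prodMk hZ') (hA.prod hB)),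
    Measure.restrict_apply (hZ' hB), Set.mk_preimage_prod, Set.inter_assoc]
  exact (Indep_iff _ _ _).1 hind _ _ ⟨A, hA, rfl⟩ ((hZ hB).inter hs)

def pastFiltration (ξ : ℕ → Ω → β) (hξ : ∀ n, Measurable (ξ n)) : Filtration ℕ mΩ where
  seq n := ⨆ i < n, MeasurableSpace.comap (ξ i) inferInstance
  mono' _ _ hnk := biSup_mono fun _ hi => hi.trans_le hnk
  le' _ := iSup₂_le fun i _ => (hξ i).comap_le

theorem measurable_pastFiltration {ξ : ℕ → Ω → β} (hξ : ∀ n, Measurable (ξ n)) {i n : ℕ}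
    (hin : i < n) : Measurable[pastFiltration ξ hξ n] (ξ i) :=
  Measurable.of_comap_le (le_iSup₂ (f := fun i (_ : i < n) => MeasurableSpace.comap (ξ i) _) i hin)

theorem indep_comap_pastFiltration {ξ : ℕ → Ω → β} (hξ : ∀ n, Measurable (ξ n)) {P : Measure Ω}
    (hindep : iIndepFun ξ P) (n : ℕ) :
    Indep (MeasurableSpace.comap (ξ n) inferInstance) (pastFiltration ξ hξ n) P := by
  have := indep_iSup_of_disjoint (fun i => (hξ i).comap_le) hindep.iIndep
    (S := {n}) (T := Set.Iio n) (by simp)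
  simp only [Set.mem_singleton_iff, iSup_iSup_eq_left, Set.mem_Iio] at this
  exact this

theorem measurable_walk {Y : Type*} [Mul Y] [MeasurableSpace Y] [MeasurableMul₂ Y]
    {ξ : ℕ → Ω → Y} (hξ : ∀ n, Measurable (ξ n)) {S : ℕ → Ω → Y} {x : Y} (hS0 : ∀ ω, S 0 ω = x)
    (hSrec : ∀ n ω, S (n + 1) ω = ξ n ω * S n ω) (n : ℕ) :
    Measurable[pastFiltration ξ hξ n] (S n) := by
  induction n with
  | zero => simp [funext hS0]
  | succ n ih =>
    rw [funext (hSrec n)]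
    exact (measurable_pastFiltration hξ n.lt_succ_self).mul
      (ih.mono ((pastFiltration ξ hξ).mono n.le_succ) le_rfl)

end Increments

section Harmonic

variable {Ω Y : Type*} {m mΩ : MeasurableSpace Ω} [Mul Y] [Countable Y] [MeasurableSpace Y]
  [MeasurableSingletonClass Y] {μ : Y → ℝ≥0∞} {h : Y → ℝ} {C : ℝ}

theorem IsHarmonic.integral_mul_right {ν : Measure Y} [IsFiniteMeasure ν]
    (hh : IsHarmonic μ h) (hC : ∀ y, |h y| ≤ C) (hν : ∀ y, ν {y} = μ y) (x : Y) :
    ∫ y, h (y * x) ∂ν = h x := by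
  rw [integral_countable (.of_bound (measurable_of_countable _).aestronglyMeasurable C
    (.of_forall fun y => hC _)), hh x]
  simp [measureReal_def, hν]

theorem IsHarmonic.setIntegral_mul_eq {P : Measure Ω} [IsFiniteMeasure P]
    (hh : IsHarmonic μ h) (hC : ∀ y, |h y| ≤ C) {X : Ω → Y} (hX : Measurable X)
    (hlaw : ∀ y, P (X ⁻¹' {y}) = μ y) (hm : m ≤ mΩ) {Z : Ω → Y}
    (hZ : Measurable[m] Z) (hind : Indep (MeasurableSpace.comap X inferInstance) m P)
    {s : Set Ω} (hs : MeasurableSet[m] s) :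
    ∫ ω in s, h (X ω * Z ω) ∂P = ∫ ω in s, h (Z ω) ∂P := by
  have hZ' : Measurable Z := hZ.mono hm le_rfl
  have hint :
      Integrable (fun p : Y × Y => h (p.1 * p.2)) ((P.map X).prod ((P.restrict s).map Z)) :=
    .of_bound (measurable_of_countable _).aestronglyMeasurable C (.of_forall fun _ => hC _)
  calc ∫ ω in s, h (X ω * Z ω) ∂P
      = ∫ p, h (p.1 * p.2) ∂((P.restrict s).map (fun ω => (X ω, Z ω))) :=
        (integral_map (f := fun p : Y × Y => h (p.1 * p.2)) (hX.prodMk hZ').aemeasurable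
          (measurable_of_countable _).aestronglyMeasurable).symm
    _ = ∫ z, ∫ y, h (y * z) ∂(P.map X) ∂((P.restrict s).map Z) := by
        rw [map_restrict_prodMk_eq_prod hm hX hZ hind hs, integral_prod_symm _ hint]
    _ = ∫ z, h z ∂((P.restrict s).map Z) := by
        congr 1 with z
        exact hh.integral_mul_right hC
          (fun y => by rw [Measure.map_apply hX (.singleton y), hlaw]) z
    _ = ∫ ω in s, h (Z ω) ∂P :=
        integral_map hZ'.aemeasurable (measurable_of_countable _).aestronglyMeasurable

theorem IsHarmonic.martingale_comp_walk {P : Measure Ω} [IsFiniteMeasure P]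
    (hh : IsHarmonic μ h) (hC : ∀ y, |h y| ≤ C) {ξ : ℕ → Ω → Y} (hξ : ∀ n, Measurable (ξ n))
    (hlaw : ∀ n y, P (ξ n ⁻¹' {y}) = μ y) (hindep : iIndepFun ξ P) {S : ℕ → Ω → Y} {x : Y}
    (hS0 : ∀ ω, S 0 ω = x) (hSrec : ∀ n ω, S (n + 1) ω = ξ n ω * S n ω) :
    Martingale (fun n ω => h (S n ω)) (pastFiltration ξ hξ) P := by
  have hM : ∀ n, Measurable[pastFiltration ξ hξ n] fun ω => h (S n ω) := fun n =>
    (measurable_of_countable h).comp (measurable_walk hξ hS0 hSrec n)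
  refine martingale_of_setIntegral_eq_succ (fun n => (hM n).stronglyMeasurable)
    (fun n => .of_bound ((hM n).mono ((pastFiltration ξ hξ).le n) le_rfl).aestronglyMeasurable C
      (.of_forall fun _ => hC _)) fun n s hs => ?_
  simp only [hSrec]
  exact (hh.setIntegral_mul_eq hC (hξ n) (hlaw n) ((pastFiltration ξ hξ).le n)
    (measurable_walk hξ hS0 hSrec n) (indep_comap_pastFiltration hξ hindep n) hs).symm

end Harmonic

section BoundedMartingale

variable {Ω : Type*} {mΩ : MeasurableSpace Ω} {P : Measure Ω} [IsFiniteMeasure P]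
  {ℱ : Filtration ℕ mΩ} {f : ℕ → Ω → ℝ} {C : ℝ}

theorem MeasureTheory.Martingale.ae_exists_tendsto_of_abs_le (hf : Martingale f ℱ P)
    (hC : ∀ n ω, |f n ω| ≤ C) : ∀ᵐ ω ∂P, ∃ c, Tendsto (fun n => f n ω) atTop (𝓝 c) :=
  hf.submartingale.exists_ae_tendsto_of_bdd (R := measureUnivNNReal P * C.toNNReal) fun n =>
    (eLpNorm_le_of_ae_bound (.of_forall fun ω => (hC n ω : ‖f n ω‖ ≤ C))).trans_eq (by simp; rfl)

theorem MeasureTheory.Martingale.ae_eq_const_of_tendsto (hf : Martingale f ℱ P)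
    (hC : ∀ n ω, |f n ω| ≤ C) {c : ℝ} (hc : ∀ᵐ ω ∂P, Tendsto (fun n => f n ω) atTop (𝓝 c)) (n : ℕ) :
    f n =ᵐ[P] fun _ => c := by
  have hL1 : Tendsto (fun n => eLpNorm (f n - fun _ => c) 1 P) atTop (𝓝 0) := by
    simp only [eLpNorm_one_eq_lintegral_enorm, Pi.sub_apply, ← ofReal_norm]
    exact tendsto_lintegral_norm_of_dominated_convergence
      (fun n => ((hf.stronglyMeasurable n).mono (ℱ.le n)).aestronglyMeasurable)
      (hasFiniteIntegral_const C) (fun n => .of_forall fun ω => hC n ω) hc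
  simpa [condExp_const (ℱ.le n)] using hf.eq_condExp_of_tendsto_eLpNorm (integrable_const c) hL1 n

end BoundedMartingale

section ZeroOne

variable {Ω : Type*} {mΩ : MeasurableSpace Ω} {P : Measure Ω}

theorem exists_ae_frequently_mem_iff [IsProbabilityMeasure P] {E : ℕ → Set Ω}
    (hE : ∀ n, MeasurableSet (E n))
    (h01 : P {ω | {n | ω ∈ E n}.Infinite} = 0 ∨ P {ω | {n | ω ∈ E n}.Infinite} = 1) :
    ∃ p : Prop, ∀ᵐ ω ∂P, (∃ᶠ n in atTop, ω ∈ E n) ↔ p := by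
  have hlimsup : {ω | {n | ω ∈ E n}.Infinite} = limsup E atTop := by
    ext ω
    simp [mem_limsup_iff_frequently_mem, Nat.frequently_atTop_iff_infinite]
  simp_rw [hlimsup, ← mem_limsup_iff_frequently_mem] at h01 ⊢
  rcases h01 with h0 | h1
  · exact ⟨False, by simpa only [iff_false] using measure_eq_zero_iff_ae_notMem.1 h0⟩
  · refine ⟨True, ?_⟩
    simp only [iff_true]
    exact mem_ae_iff.2 ((prob_compl_eq_zero_iff (.measurableSet_limsup hE)).2 h1)

theorem le_of_tendsto_of_frequently_lt_imp {u v : ℕ → ℝ} {c c' : ℝ}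
    (hu : Tendsto u atTop (𝓝 c)) (hv : Tendsto v atTop (𝓝 c'))
    (huv : ∀ q : ℚ, (∃ᶠ n in atTop, v n < q) → ∃ᶠ n in atTop, u n < q) : c ≤ c' := by
  by_contra! hlt
  obtain ⟨q, hc'q, hqc⟩ := exists_rat_btwn hlt
  obtain ⟨n, hlt, hgt⟩ := ((huv q (hv.eventually (gt_mem_nhds hc'q)).frequently).and_eventually
    (hu.eventually (lt_mem_nhds hqc))).exists
  exact hlt.not_gt hgt

theorem exists_ae_tendsto_const [NeZero P] {u : ℕ → Ω → ℝ}
    (hconv : ∀ᵐ ω ∂P, ∃ c, Tendsto (fun n => u n ω) atTop (𝓝 c))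
    (h01 : ∀ q : ℚ, ∃ p : Prop, ∀ᵐ ω ∂P, (∃ᶠ n in atTop, u n ω < q) ↔ p) :
    ∃ c, ∀ᵐ ω ∂P, Tendsto (fun n => u n ω) atTop (𝓝 c) := by
  choose p hp using h01
  have hgood := hconv.and (ae_all_iff.2 hp)
  obtain ⟨ω₀, ⟨c₀, hc₀⟩, hp₀⟩ := hgood.exists
  refine ⟨c₀, hgood.mono fun ω ⟨⟨c, hc⟩, hpω⟩ => ?_⟩
  have hcc₀ : c = c₀ := le_antisymm
    (le_of_tendsto_of_frequently_lt_imp hc hc₀ fun q h => (hpω q).2 ((hp₀ q).1 h))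
    (le_of_tendsto_of_frequently_lt_imp hc₀ hc fun q h => (hp₀ q).2 ((hpω q).1 h))
  rwa [← hcc₀]

end ZeroOne

theorem stmt10_general
    (Y : Type*) [Countable Y] [Group Y] [MeasurableSpace Y] [MeasurableSingletonClass Y]
    (μ : Y → ℝ≥0∞)
    (hgen : Subgroup.closure {y : Y | μ y ≠ 0} = ⊤)
    (Ω : Type*) [MeasurableSpace Ω] (P : Measure Ω) [IsProbabilityMeasure P]
    (ξ : ℕ → Ω → Y) (hmeas : ∀ n, Measurable (ξ n))
    (hlaw : ∀ n y, P {ω | ξ n ω = y} = μ y)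
    (hindep : ProbabilityTheory.iIndepFun ξ P)
    (S : ℕ → Ω → Y) (hS0 : ∀ ω, S 0 ω = 1)
    (hSrec : ∀ n ω, S (n + 1) ω = ξ n ω * S n ω)
    (hzeroone : ∀ Λ : Set Y, P {ω | {n : ℕ | S n ω ∈ Λ}.Infinite} = 0 ∨
      P {ω | {n : ℕ | S n ω ∈ Λ}.Infinite} = 1) :
    ∀ h : Y → ℝ, (∃ C, ∀ x, |h x| ≤ C) →
      (∀ x, h x = ∑' y, (μ y).toReal * h (y * x)) → ∀ x x', h x = h x' := by
  rintro h ⟨C, hC⟩ hharm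
  refine eq_of_forall_mul_eq_of_closure_eq_top hgen fun y hy x => ?_
  have hS : ∀ n, Measurable (S n) := fun n =>
    (measurable_walk hmeas hS0 hSrec n).mono ((pastFiltration ξ hmeas).le n) le_rfl
  have hM : Martingale (fun n ω => h (S n ω * x)) (pastFiltration ξ hmeas) P :=
    IsHarmonic.martingale_comp_walk hharm hC hmeas hlaw hindep (x := x)
      (by simp [hS0]) (by simp [hSrec, mul_assoc])
  obtain ⟨c, hc⟩ := exists_ae_tendsto_const (hM.ae_exists_tendsto_of_abs_le fun _ _ => hC _)
    fun q => exists_ae_frequently_mem_iff (E := fun n => S n ⁻¹' {z | h (z * x) < q})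
      (fun n => hS n (Set.to_countable _).measurableSet)
      (hzeroone {z | h (z * x) < q})
  obtain ⟨ω₀, hω₀⟩ := (hM.ae_eq_const_of_tendsto (fun _ _ => hC _) hc 0).exists
  obtain ⟨ω, hωy, hωc⟩ := Measure.exists_mem_of_measure_ne_zero_of_ae ((hlaw 0 y).trans_ne hy)
    (ae_restrict_of_ae (hM.ae_eq_const_of_tendsto (fun _ _ => hC _) hc 1))
  simp only [hS0, one_mul, hSrec, mul_one, Set.mem_ofPred_eq] at hω₀ hωc hωy
  rw [← hωy, hωc, hω₀]

/-- Conversely, if for every `Λ ⊆ Y` the probability that the random walk visits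
`Λ` infinitely often is `0` or `1`, then every bounded `μ`-harmonic function on
`Y` is constant. -/
theorem stmt10
    (Y : Type*) [Countable Y] [Group Y] [MeasurableSpace Y] [MeasurableSingletonClass Y]
    (μ : Y → ℝ≥0∞) (hμ1 : ∑' y, μ y = 1)
    (hgen : Subgroup.closure {y : Y | μ y ≠ 0} = ⊤)
    (Ω : Type*) [MeasurableSpace Ω] (P : Measure Ω) [IsProbabilityMeasure P]
    (ξ : ℕ → Ω → Y) (hmeas : ∀ n, Measurable (ξ n))
    (hlaw : ∀ n y, P {ω | ξ n ω = y} = μ y)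
    (hindep : ProbabilityTheory.iIndepFun ξ P)
    (S : ℕ → Ω → Y) (hS0 : ∀ ω, S 0 ω = 1)
    (hSrec : ∀ n ω, S (n + 1) ω = ξ n ω * S n ω)
    (hzeroone : ∀ Λ : Set Y, P {ω | {n : ℕ | S n ω ∈ Λ}.Infinite} = 0 ∨
      P {ω | {n : ℕ | S n ω ∈ Λ}.Infinite} = 1) :
    ∀ h : Y → ℝ, (∃ C, ∀ x, |h x| ≤ C) →
      (∀ x, h x = ∑' y, (μ y).toReal * h (y * x)) → ∀ x x', h x = h x' :=
  stmt10_general Y μ hgen Ω P ξ hmeas hlaw hindep S hS0 hSrec hzeroone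
end

section
/- Let T be a finite rooted tree with edge retention probabilities p_e ∈ (0,1], and define the kernel F on the leaf boundary ∂T by F(x,y) = Π{p_e^{-1} : e ∈ Path(x) ∩ Path(y)} for x ≠ y, and F(x,x) = 2·Π{p_e^{-1} : e ∈ Path(x)}. Then Cap_F(∂T) ≤ P[some leaf survives the percolation] ≤ 2·Cap_F(∂T). -/
/-!
Write `A x` for the event that every edge on the path to the leaf `x` is retained, so that
`P (A x ∩ A y) = P (A x) * P (A y) * ∏_{Path x ∩ Path y} p⁻¹`.

Lower bound: for a probability measure `ν` on the leaves, `Z = ∑ ν x * 𝟙 (A x) / P (A x)` has mean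
`1`, vanishes off the survival event `S`, and has second moment the `ν`-energy of the kernel
`∏_{Path x ∩ Path y} p⁻¹ ≤ F`; Cauchy–Schwarz gives `1 ≤ P S * energy`.

Upper bound: order the vertices depth-first (lexicographically by their ancestor lists) and let
`ν x` be the probability that `x` is the first leaf, in this order, whose path is retained, given
`S`. For `x ≤ y` this event does not depend on the edges of `Path y \ Path x`, so
`∑_{x ≤ y} P (x first) * ∏_{Path x ∩ Path y} p⁻¹ * P (A y) = ∑_{x ≤ y} P (x first ∩ A y) ≤ P (A y)`.
Splitting the double sum defining the `F`-energy of `ν` along the order bounds it by `2 / P S`.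
-/

open MeasureTheory ENNReal
open scoped Classical

/-- The set of edges on the path from the root `ρ` to `x` in a tree given by a
parent function `par`; the edge above a non-root vertex `v` is identified with `v`. -/
noncomputable def pathE {V : Type*} [Fintype V] (ρ : V) (par : V → V) (x : V) : Finset V :=
  (Set.toFinite {v : V | v ≠ ρ ∧ ∃ n : ℕ, par^[n] x = v}).toFinset

/-- `x` is a leaf: a vertex other than the root with no children. -/
def IsLeaf {V : Type*} (ρ : V) (par : V → V) (x : V) : Prop :=
  x ≠ ρ ∧ ∀ v, par v = x → v = x

open ProbabilityTheory Finset

section Capacity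

variable {Y : Type*} [Fintype Y]

noncomputable def energy (K : Y → Y → ℝ≥0∞) (ν : Y → ℝ≥0∞) : ℝ≥0∞ :=
  ∑ x, ∑ y, K x y * ν x * ν y

theorem energy_mono {K K' : Y → Y → ℝ≥0∞} (hK : ∀ x y, K x y ≤ K' x y) (ν : Y → ℝ≥0∞) :
    energy K ν ≤ energy K' ν := by
  unfold energy
  gcongr with x _ y _
  exact hK x y

theorem inv_energy_le_capK {K : Y → Y → ℝ≥0∞} {Λ : Set Y} {ν : Y → ℝ≥0∞}
    (hν : ∑ y, ν y = 1) (hνΛ : ∀ y ∉ Λ, ν y = 0) : (energy K ν)⁻¹ ≤ capK K Λ := by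
  rw [capK, ENNReal.inv_le_inv]
  refine iInf_le_of_le ⟨ν, by rwa [tsum_fintype], hνΛ⟩ ?_
  simp only [energy, tsum_fintype, le_refl]

theorem capK_le_of_one_le_mul_energy {K : Y → Y → ℝ≥0∞} {Λ : Set Y} {c : ℝ≥0∞}
    (h : ∀ ν : Y → ℝ≥0∞, ∑ y, ν y = 1 → (∀ y ∉ Λ, ν y = 0) → 1 ≤ c * energy K ν) :
    capK K Λ ≤ c := by
  rw [capK, ENNReal.inv_le_iff_inv_le]
  refine le_iInf fun ⟨ν, hν, hνΛ⟩ => ?_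
  rw [tsum_fintype] at hν
  have h1 := h ν hν hνΛ
  simp only [tsum_fintype]
  exact (ENNReal.inv_le_iff_le_mul (fun _ hc => by simp [hc] at h1)
    (fun _ hE => by simp [energy, hE] at h1)).2 h1

end Capacity

theorem Finset.sum_sum_ite_eq_two_mul_sum_filter_le {V R α : Type*} [Fintype V] [DecidableEq V]
    [CommSemiring R] [LinearOrder α] {κ : V → α} (hκ : Function.Injective κ) {K : V → V → R}
    (hK : ∀ x y, K x y = K y x) :
    ∑ x, ∑ y, (if x = y then 2 else 1) * K x y = 2 * ∑ y, ∑ x with κ x ≤ κ y, K x y := by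
  have hsplit : ∀ x y, (if x = y then (2 : R) else 1) * K x y
      = (if κ x ≤ κ y then K x y else 0) + (if κ y ≤ κ x then K y x else 0) := by
    intro x y
    rcases lt_trichotomy (κ x) (κ y) with h | h | h
    · simp [h.le, not_le.2 h, hκ.ne_iff.1 h.ne]
    · simp [hκ h, two_mul]
    · simp [h.le, not_le.2 h, hκ.ne_iff.1 h.ne', hK x y]
  simp_rw [hsplit, sum_add_distrib, two_mul, sum_filter]
  congr 1
  exact sum_comm

namespace ENNReal

variable {ι : Type*} {p : ι → ℝ≥0∞}

theorem prod_inv_mul_prod (hp0 : ∀ i, p i ≠ 0) (hp : ∀ i, p i ≠ ⊤) (s : Finset ι) :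
    (∏ i ∈ s, (p i)⁻¹) * ∏ i ∈ s, p i = 1 := by
  rw [← prod_mul_distrib]
  exact prod_eq_one fun i _ => ENNReal.inv_mul_cancel (hp0 i) (hp i)

variable [DecidableEq ι]

theorem prod_inv_mul_prod_inv_mul_prod_union (hp0 : ∀ i, p i ≠ 0) (hp : ∀ i, p i ≠ ⊤)
    (s t : Finset ι) :
    (∏ i ∈ s, (p i)⁻¹) * (∏ i ∈ t, (p i)⁻¹) * ∏ i ∈ s ∪ t, p i = ∏ i ∈ s ∩ t, (p i)⁻¹ := by
  rw [← prod_union_inter (f := fun i => (p i)⁻¹), mul_right_comm, prod_inv_mul_prod hp0 hp,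
    one_mul]

theorem prod_inter_inv_mul_prod (hp0 : ∀ i, p i ≠ 0) (hp : ∀ i, p i ≠ ⊤) (s t : Finset ι) :
    (∏ i ∈ s ∩ t, (p i)⁻¹) * ∏ i ∈ t, p i = ∏ i ∈ t \ s, p i := by
  rw [← prod_inter_mul_prod_sdiff t s, inter_comm, ← mul_assoc, prod_inv_mul_prod hp0 hp, one_mul]

end ENNReal

namespace MeasureTheory

theorem sq_lintegral_le_measure_mul_lintegral_sq {Ω : Type*} [MeasurableSpace Ω] (μ : Measure Ω)
    {S : Set Ω} (hS : MeasurableSet S) {Z : Ω → ℝ≥0∞} (hZ : AEMeasurable Z μ)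
    (hZS : ∀ ω ∉ S, Z ω = 0) :
    (∫⁻ ω, Z ω ∂μ) ^ 2 ≤ μ S * ∫⁻ ω, Z ω ^ 2 ∂μ := by
  have holder := ENNReal.lintegral_mul_le_Lp_mul_Lq μ Real.HolderConjugate.two_two
    (f := S.indicator 1) (aemeasurable_one.indicator hS) hZ
  have hZ_eq : S.indicator 1 * Z = Z := by
    ext ω
    by_cases h : ω ∈ S <;> simp [h, hZS]
  have hS_sq : (fun ω => S.indicator 1 ω ^ (2 : ℝ)) = S.indicator (1 : Ω → ℝ≥0∞) := by
    ext ω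
    by_cases h : ω ∈ S <;> simp [h]
  rw [hZ_eq, hS_sq, lintegral_indicator_one hS] at holder
  calc (∫⁻ ω, Z ω ∂μ) ^ 2 ≤ _ := pow_le_pow_left' holder 2
    _ = μ S * ∫⁻ ω, Z ω ^ 2 ∂μ := by
      simp_rw [mul_pow, ← ENNReal.rpow_natCast, ← ENNReal.rpow_mul]
      norm_num

theorem Measure.pi_inter_pi_eq_mul {ι : Type*} [Fintype ι] {Ω : ι → Type*}
    [∀ i, MeasurableSpace (Ω i)] (μ : ∀ i, Measure (Ω i)) [∀ i, IsProbabilityMeasure (μ i)]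
    (s : Finset ι) {E : Set (∀ i, Ω i)} (hE : MeasurableSet E)
    (hEs : ∀ ω ω', (∀ i ∉ s, ω i = ω' i) → ω ∈ E → ω' ∈ E)
    {t : ∀ i, Set (Ω i)} (ht : ∀ i, MeasurableSet (t i)) :
    Measure.pi μ (E ∩ (s : Set ι).pi t) = Measure.pi μ E * ∏ i ∈ s, μ i (t i) := by
  classical
  rcases E.eq_empty_or_nonempty with rfl | ⟨ω₀, hω₀⟩
  · simp
  have hind : IndepFun (fun ω (i : ↥sᶜ) => ω i) (fun ω (i : ↥s) => ω i) (Measure.pi μ) :=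
    (iIndepFun_pi (X := fun _ => id) fun _ => aemeasurable_id).indepFun_finset sᶜ s
      disjoint_compl_left fun i => measurable_pi_apply i
  let fill : (∀ i : ↥sᶜ, Ω i) → ∀ i, Ω i := fun η i =>
    if h : i ∈ s then ω₀ i else η ⟨i, mem_compl.2 h⟩
  have hfill : Measurable fill := by
    refine measurable_pi_lambda _ fun i => ?_
    by_cases h : i ∈ s
    · simp only [fill, h, dite_true]; exact measurable_const
    · simp only [fill, h, dite_false]; exact measurable_pi_apply _
  have hE_eq : E = (fun ω (i : ↥sᶜ) => ω i) ⁻¹' (fill ⁻¹' E) := by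
    ext ω
    refine ⟨fun hω => hEs ω _ (fun i hi => ?_) hω, fun hω => hEs _ ω (fun i hi => ?_) hω⟩ <;>
      simp [fill, hi]
  have hpi_eq :
      (s : Set ι).pi t = (fun ω (i : ↥s) => ω i) ⁻¹' Set.univ.pi fun (i : ↥s) => t i := by
    ext ω; simp
  have h := hind.measure_inter_preimage_eq_mul _ _ (hfill hE) (.univ_pi fun i => ht i)
  rw [← hE_eq, ← hpi_eq] at h
  rw [h, Measure.pi_pi_finset]

end MeasureTheory

theorem PMF.bernoulli_toMeasure_true {q : NNReal} (h : q ≤ 1) :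
    (PMF.bernoulli q h).toMeasure {true} = q := by
  rw [PMF.toMeasure_apply_singleton _ _ (measurableSet_singleton _), PMF.bernoulli_apply]
  rfl

theorem List.IsPrefix.of_lt_of_le {α : Type*} [LinearOrder α] :
    ∀ {P l₁ l₂ l₃ : List α}, P <+: l₁ → P <+: l₃ → l₁ < l₂ → l₂ ≤ l₃ → P <+: l₂
  | [], _, _, _, _, _, _, _ => List.nil_prefix
  | _ :: _, _, [], _, h₁, _, h₁₂, _ => by
    obtain ⟨t, rfl⟩ := h₁
    exact absurd h₁₂ (List.not_lt_nil _)
  | a :: P, _, b :: l₂, _, h₁, h₃, h₁₂, h₂₃ => by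
    obtain ⟨t₁, rfl⟩ := h₁
    obtain ⟨t₃, rfl⟩ := h₃
    rw [List.cons_append, List.cons_lt_cons_iff] at h₁₂
    rcases h₂₃.lt_or_eq with h₂₃ | h₂₃
    · rw [List.cons_append, List.cons_lt_cons_iff] at h₂₃
      rcases h₁₂ with hab | ⟨rfl, h₁₂⟩
      · rcases h₂₃ with hba | ⟨rfl, -⟩
        · exact absurd (hab.trans hba) (lt_irrefl a)
        · exact absurd hab (lt_irrefl b)
      · rcases h₂₃ with haa | ⟨-, h₂₃⟩
        · exact absurd haa (lt_irrefl a)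
        · exact List.cons_prefix_cons.2
            ⟨rfl, of_lt_of_le (List.prefix_append _ _) (List.prefix_append _ _) h₁₂ h₂₃.le⟩
    · rw [h₂₃]
      exact List.prefix_append _ _

namespace Percolation

variable {ι : Type*}

def allOpen (s : Finset ι) : Set (ι → Bool) :=
  (s : Set ι).pi fun _ => {true}

theorem mem_allOpen {s : Finset ι} {ω : ι → Bool} : ω ∈ allOpen s ↔ ∀ i ∈ s, ω i = true :=
  Iff.rfl

theorem allOpen_union [DecidableEq ι] (s t : Finset ι) :
    allOpen (s ∪ t) = allOpen s ∩ allOpen t := by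
  rw [allOpen, coe_union, Set.union_pi]
  rfl

variable {V : Type*} (Λ : Finset V) (π : V → Finset ι)

def anyOpen : Set (ι → Bool) :=
  ⋃ x ∈ Λ, allOpen (π x)

noncomputable def pathKernel [DecidableEq ι] (p : ι → ℝ≥0∞) (x y : V) : ℝ≥0∞ :=
  ∏ i ∈ π x ∩ π y, (p i)⁻¹

variable {α : Type*} [LinearOrder α] (κ : V → α)

def firstOpen (x : V) : Set (ι → Bool) :=
  {ω | x ∈ Λ ∧ ω ∈ allOpen (π x) ∧ ∀ z ∈ Λ, κ z < κ x → ω ∉ allOpen (π z)}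

def IsDepthFirst [DecidableEq ι] : Prop :=
  ∀ x y z, κ z < κ x → κ x ≤ κ y → π z ∩ π y ⊆ π x

variable {Λ π κ}

theorem pairwise_disjoint_firstOpen (hκ : Function.Injective κ) :
    Pairwise fun x y => Disjoint (firstOpen Λ π κ x) (firstOpen Λ π κ y) := by
  intro x y hxy
  rw [Set.disjoint_left]
  rintro ω ⟨hx, hωx, hx_first⟩ ⟨hy, hωy, hy_first⟩
  rcases lt_or_gt_of_ne (hκ.ne hxy) with h | h
  · exact hy_first x hx h hωx
  · exact hx_first y hy h hωy

theorem iUnion_firstOpen : ⋃ x, firstOpen Λ π κ x = anyOpen Λ π := by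
  ext ω
  simp only [Set.mem_iUnion, anyOpen]
  constructor
  · rintro ⟨x, hx, hωx, -⟩
    exact ⟨x, hx, hωx⟩
  · rintro ⟨x₀, hx₀, hωx₀⟩
    obtain ⟨x, hx, hx_min⟩ :=
      exists_min_image {x ∈ Λ | ω ∈ allOpen (π x)} κ ⟨x₀, by simp [hx₀, hωx₀]⟩
    rw [mem_filter] at hx
    exact ⟨x, hx.1, hx.2, fun z hz hzx hωz => not_lt.2 (hx_min z (mem_filter.2 ⟨hz, hωz⟩)) hzx⟩

variable [Fintype ι] {μ : ι → Measure Bool} [∀ i, IsProbabilityMeasure (μ i)] {p : ι → ℝ≥0∞}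

theorem measure_allOpen (s : Finset ι) : Measure.pi μ (allOpen s) = ∏ i ∈ s, μ i {true} :=
  Measure.pi_pi_finset μ _ s

variable [DecidableEq ι]

theorem measure_firstOpen_inter_allOpen (hμp : ∀ i, μ i {true} = p i)
    (hdfs : IsDepthFirst π κ) {x y : V} (hxy : κ x ≤ κ y) :
    Measure.pi μ (firstOpen Λ π κ x ∩ allOpen (π y))
      = Measure.pi μ (firstOpen Λ π κ x) * ∏ i ∈ π y \ π x, p i := by
  have hset : firstOpen Λ π κ x ∩ allOpen (π y) = firstOpen Λ π κ x ∩ allOpen (π y \ π x) := by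
    ext ω
    simp only [Set.mem_inter_iff, mem_allOpen, mem_sdiff]
    refine and_congr_right fun hω => ⟨fun h i hi => h i hi.1, fun h i hi => ?_⟩
    by_cases hix : i ∈ π x
    · exact hω.2.1 i hix
    · exact h i ⟨hi, hix⟩
  have hagree : ∀ ω ω' : ι → Bool, (∀ i ∉ π y \ π x, ω i = ω' i) → ∀ s,
      (∀ i ∈ s, i ∉ π y \ π x) → (ω ∈ allOpen s ↔ ω' ∈ allOpen s) := fun ω ω' h s hs => by
    simp only [mem_allOpen]
    exact forall₂_congr fun i hi => by rw [h i (hs i hi)]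
  rw [hset, allOpen, Measure.pi_inter_pi_eq_mul μ _ .of_discrete ?_ fun _ => .of_discrete]
  · simp only [hμp]
  rintro ω ω' h ⟨hx, hωx, hx_first⟩
  have hdisj : ∀ z, κ z < κ x → ∀ i ∈ π z, i ∉ π y \ π x := fun z hzx i hiz hi => by
    rw [mem_sdiff] at hi
    exact hi.2 (hdfs x y z hzx hxy (mem_inter.2 ⟨hiz, hi.1⟩))
  refine ⟨hx, (hagree ω ω' h _ fun i hi hi' => (mem_sdiff.1 hi').2 hi).1 hωx,
    fun z hz hzx => ?_⟩
  rw [← hagree ω ω' h _ (hdisj z hzx)]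
  exact hx_first z hz hzx

variable [Fintype V]

theorem one_le_measure_anyOpen_mul_energy (hμp : ∀ i, μ i {true} = p i) (hp0 : ∀ i, p i ≠ 0)
    {ν : V → ℝ≥0∞} (hν : ∑ x, ν x = 1) (hνΛ : ∀ x ∉ Λ, ν x = 0) :
    1 ≤ Measure.pi μ (anyOpen Λ π) * energy (pathKernel π p) ν := by
  have hp : ∀ i, p i ≠ ⊤ := fun i => hμp i ▸ measure_ne_top _ _
  have hP : ∀ s, Measure.pi μ (allOpen s) = ∏ i ∈ s, p i := fun s => by
    simp only [measure_allOpen, hμp]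
  set c : V → ℝ≥0∞ := fun x => ν x * ∏ i ∈ π x, (p i)⁻¹
  set Z : (ι → Bool) → ℝ≥0∞ := fun ω => ∑ x, c x * (allOpen (π x)).indicator 1 ω
  have hZ_zero : ∀ ω ∉ anyOpen Λ π, Z ω = 0 := by
    refine fun ω hω => sum_eq_zero fun x _ => ?_
    by_cases hx : x ∈ Λ
    · rw [Set.indicator_of_notMem fun h => hω (Set.mem_biUnion hx h), mul_zero]
    · simp [c, hνΛ x hx]
  have hZ : ∫⁻ ω, Z ω ∂Measure.pi μ = 1 := by
    rw [lintegral_finsetSum _ fun _ _ => Measurable.of_discrete, ← hν]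
    refine sum_congr rfl fun x _ => ?_
    rw [lintegral_const_mul _ Measurable.of_discrete, lintegral_indicator_one .of_discrete, hP,
      mul_assoc, prod_inv_mul_prod hp0 hp, mul_one]
  have hZ_sq : ∫⁻ ω, Z ω ^ 2 ∂Measure.pi μ = energy (pathKernel π p) ν := by
    have hZ_sq_eq : ∀ ω, Z ω ^ 2
        = ∑ x, ∑ y, c x * c y * (allOpen (π x ∪ π y)).indicator 1 ω := fun ω => by
      simp_rw [sq, Z, sum_mul_sum, allOpen_union, Set.inter_indicator_one, Pi.mul_apply]
      exact sum_congr rfl fun x _ => sum_congr rfl fun y _ => by ring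
    simp_rw [hZ_sq_eq]
    rw [lintegral_finsetSum _ fun _ _ => Measurable.of_discrete]
    refine sum_congr rfl fun x _ => ?_
    rw [lintegral_finsetSum _ fun _ _ => Measurable.of_discrete]
    refine sum_congr rfl fun y _ => ?_
    rw [lintegral_const_mul _ Measurable.of_discrete, lintegral_indicator_one .of_discrete, hP,
      pathKernel, ← prod_inv_mul_prod_inv_mul_prod_union hp0 hp]
    ring
  calc 1 = (∫⁻ ω, Z ω ∂Measure.pi μ) ^ 2 := by rw [hZ, one_pow]
    _ ≤ _ := sq_lintegral_le_measure_mul_lintegral_sq _ .of_discrete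
        Measurable.of_discrete.aemeasurable hZ_zero
    _ = _ := by rw [hZ_sq]

theorem capK_le_measure_anyOpen [DecidableEq V] (hμp : ∀ i, μ i {true} = p i)
    (hp0 : ∀ i, p i ≠ 0) :
    capK (fun x y => (if x = y then 2 else 1) * pathKernel π p x y) Λ
      ≤ Measure.pi μ (anyOpen Λ π) := by
  refine capK_le_of_one_le_mul_energy fun ν hν hνΛ => ?_
  calc 1 ≤ Measure.pi μ (anyOpen Λ π) * energy (pathKernel π p) ν :=
        one_le_measure_anyOpen_mul_energy hμp hp0 hν hνΛ
    _ ≤ _ := by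
        gcongr
        exact energy_mono (fun x y => le_mul_of_one_le_left zero_le (by split_ifs <;> norm_num)) ν

theorem sum_pathKernel_mul_measure_firstOpen_le_one (hμp : ∀ i, μ i {true} = p i)
    (hp0 : ∀ i, p i ≠ 0) (hdfs : IsDepthFirst π κ)
    (hκ : Function.Injective κ) (y : V) :
    ∑ x with κ x ≤ κ y, pathKernel π p x y * Measure.pi μ (firstOpen Λ π κ x) ≤ 1 := by
  have hp : ∀ i, p i ≠ ⊤ := fun i => hμp i ▸ measure_ne_top _ _
  have hPy : Measure.pi μ (allOpen (π y)) = ∏ i ∈ π y, p i := by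
    simp only [measure_allOpen, hμp]
  have hPy0 : ∏ i ∈ π y, p i ≠ 0 := prod_ne_zero_iff.2 fun i _ => hp0 i
  have hPy_top : ∏ i ∈ π y, p i ≠ ⊤ := ENNReal.prod_ne_top fun i _ => hp i
  rw [← ENNReal.mul_le_mul_iff_left hPy0 hPy_top, one_mul, sum_mul]
  calc ∑ x with κ x ≤ κ y, pathKernel π p x y * Measure.pi μ (firstOpen Λ π κ x) * ∏ i ∈ π y, p i
      = ∑ x with κ x ≤ κ y, Measure.pi μ (firstOpen Λ π κ x ∩ allOpen (π y)) := by
        refine sum_congr rfl fun x hx => ?_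
        rw [measure_firstOpen_inter_allOpen hμp hdfs (mem_filter.1 hx).2, pathKernel,
          ← prod_inter_inv_mul_prod hp0 hp]
        ring
    _ = Measure.pi μ (⋃ x ∈ ({x | κ x ≤ κ y} : Finset V), firstOpen Λ π κ x ∩ allOpen (π y)) :=
        (measure_biUnion_finset (fun x _ x' _ hxx' => ((pairwise_disjoint_firstOpen hκ hxx').mono
          Set.inter_subset_left Set.inter_subset_left)) fun _ _ => .of_discrete).symm
    _ ≤ Measure.pi μ (allOpen (π y)) :=
        measure_mono (Set.iUnion₂_subset fun _ _ => Set.inter_subset_right)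
    _ = ∏ i ∈ π y, p i := hPy

theorem measure_anyOpen_le_two_mul_capK [DecidableEq V] (hμp : ∀ i, μ i {true} = p i)
    (hp0 : ∀ i, p i ≠ 0) (hdfs : IsDepthFirst π κ)
    (hκ : Function.Injective κ) :
    Measure.pi μ (anyOpen Λ π)
      ≤ 2 * capK (fun x y => (if x = y then 2 else 1) * pathKernel π p x y) Λ := by
  set P := Measure.pi μ
  set S := anyOpen Λ π
  rcases eq_or_ne (P S) 0 with hS0 | hS0
  · simp [hS0]
  have hS_top : P S ≠ ⊤ := measure_ne_top _ _
  set ν : V → ℝ≥0∞ := fun x => P (firstOpen Λ π κ x) * (P S)⁻¹ with hν_def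
  have hν : ∑ x, ν x = 1 := by
    rw [hν_def, ← sum_mul, ← tsum_fintype (L := .unconditional _),
      ← measure_iUnion (pairwise_disjoint_firstOpen hκ) fun _ => .of_discrete, iUnion_firstOpen,
      ENNReal.mul_inv_cancel hS0 hS_top]
  have hνΛ : ∀ x ∉ Λ, ν x = 0 := fun x hx => by simp [ν, firstOpen, hx]
  have henergy : energy (fun x y => (if x = y then 2 else 1) * pathKernel π p x y) ν
      ≤ 2 * (P S)⁻¹ := by
    calc _ = 2 * ∑ y, ∑ x with κ x ≤ κ y, pathKernel π p x y * ν x * ν y := by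
          simp_rw [energy, mul_assoc]
          exact sum_sum_ite_eq_two_mul_sum_filter_le hκ fun x y => by
            rw [pathKernel, pathKernel, inter_comm]; ring
      _ = 2 * ∑ y, ν y * (P S)⁻¹ *
            ∑ x with κ x ≤ κ y, pathKernel π p x y * P (firstOpen Λ π κ x) := by
          refine congrArg _ <| sum_congr rfl fun y _ => ?_
          rw [mul_sum]
          exact sum_congr rfl fun x _ => by rw [hν_def]; ring
      _ ≤ 2 * ∑ y, ν y * (P S)⁻¹ * 1 := by
          gcongr with y
          exact sum_pathKernel_mul_measure_firstOpen_le_one hμp hp0 hdfs hκ y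
      _ = 2 * (P S)⁻¹ := by rw [← sum_mul, ← sum_mul, hν, one_mul, mul_one]
  have hcap := (ENNReal.inv_le_inv.2 henergy).trans (inv_energy_le_capK hν hνΛ)
  rwa [ENNReal.mul_inv (by simp) (by simp), inv_inv, ENNReal.inv_mul_le_iff (by simp) (by simp)]
    at hcap

end Percolation

section RootedTree

variable {V : Type*} {ρ : V} {par : V → V}

noncomputable def depth (hreach : ∀ v, ∃ n : ℕ, par^[n] v = ρ) (x : V) : ℕ :=
  Nat.find (hreach x)

-- Root first, so that the lexicographic order on ancestor lists is a depth-first order.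
noncomputable def ancestorList (hreach : ∀ v, ∃ n : ℕ, par^[n] v = ρ) (x : V) : List V :=
  (List.iterate par x (depth hreach x + 1)).reverse

variable (hreach : ∀ v, ∃ n : ℕ, par^[n] v = ρ)

theorem iterate_depth (x : V) : par^[depth hreach x] x = ρ :=
  Nat.find_spec (hreach x)

theorem lt_depth_of_iterate_ne_root (hroot : par ρ = ρ) {x : V} {m : ℕ} (h : par^[m] x ≠ ρ) :
    m < depth hreach x := by
  by_contra! hm
  obtain ⟨k, rfl⟩ := Nat.exists_eq_add_of_le hm
  rw [add_comm, Function.iterate_add_apply, iterate_depth, Function.iterate_fixed hroot] at h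
  exact h rfl

theorem depth_iterate_add {x : V} {m : ℕ} (hm : m ≤ depth hreach x) :
    depth hreach (par^[m] x) + m = depth hreach x := by
  have h₁ : depth hreach (par^[m] x) ≤ depth hreach x - m := Nat.find_min' _ <| by
    rw [← Function.iterate_add_apply, Nat.sub_add_cancel hm, iterate_depth]
  have h₂ : depth hreach x ≤ depth hreach (par^[m] x) + m := Nat.find_min' _ <| by
    rw [Function.iterate_add_apply, iterate_depth]
  omega

theorem mem_ancestorList {x v : V} :
    v ∈ ancestorList hreach x ↔ ∃ m ≤ depth hreach x, v = par^[m] x := by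
  simp only [ancestorList, List.mem_reverse, List.mem_iterate, Nat.lt_succ_iff]

theorem ancestorList_injective : Function.Injective (ancestorList hreach) := fun x y h => by
  simpa [ancestorList, List.iterate] using congrArg (fun l => l.reverse.head?) h

theorem ancestorList_iterate_prefix {x : V} {m : ℕ} (hm : m ≤ depth hreach x) :
    ancestorList hreach (par^[m] x) <+: ancestorList hreach x := by
  have hlen : depth hreach x + 1 = m + (depth hreach (par^[m] x) + 1) := by
    rw [← depth_iterate_add hreach hm]; ring
  rw [ancestorList, ancestorList, hlen, List.iterate_add par x, List.reverse_append]
  exact List.prefix_append _ _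

theorem isDepthFirst_ancestorList [Fintype V] [DecidableEq V] [LinearOrder V]
    (hroot : par ρ = ρ) : Percolation.IsDepthFirst (pathE ρ par) (ancestorList hreach) := by
  intro x y z hzx hxy v hv
  simp only [Finset.mem_inter, pathE, Set.Finite.mem_toFinset, Set.mem_ofPred_eq] at hv ⊢
  obtain ⟨⟨hvρ, n, rfl⟩, -, n', hn'⟩ := hv
  have hv_prefix : ∀ {w : V} {k : ℕ}, par^[k] w = par^[n] z →
      ancestorList hreach (par^[n] z) <+: ancestorList hreach w := fun {w k} hk => by
    rw [← hk]
    exact ancestorList_iterate_prefix hreach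
      (lt_depth_of_iterate_ne_root hreach hroot (hk ▸ hvρ)).le
  have hx := (hv_prefix rfl).of_lt_of_le (hv_prefix hn') hzx hxy
  obtain ⟨m, -, hm⟩ := (mem_ancestorList hreach).1 <| hx.subset <|
    (mem_ancestorList hreach).2 ⟨0, Nat.zero_le _, rfl⟩
  exact ⟨hvρ, m, hm.symm⟩

end RootedTree

open Percolation in
/-- Lyons' theorem: for independent percolation on a finite rooted tree with
retention probabilities `p_e ∈ (0,1]`, the probability that some leaf survives is
between `Cap_F(∂T)` and `2·Cap_F(∂T)` for the kernel
`F(x,y) = ∏_{e ∈ Path(x) ∩ Path(y)} p_e⁻¹` (`x ≠ y`), `F(x,x) = 2 ∏_{e ∈ Path(x)} p_e⁻¹`. -/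
theorem stmt13
    (V : Type*) [Fintype V] [DecidableEq V]
    (ρ : V) (par : V → V) (hroot : par ρ = ρ)
    (hreach : ∀ v, ∃ n : ℕ, par^[n] v = ρ)
    (p : V → ℝ≥0∞) (hp0 : ∀ e, 0 < p e) (hp1 : ∀ e, p e ≤ 1)
    (P : Measure (V → Bool))
    (hP : P = Measure.pi (fun e : V => (PMF.bernoulli (p e).toNNReal (by have h := hp1 e; rw [← ENNReal.coe_le_coe, ENNReal.coe_toNNReal (ne_top_of_le_ne_top ENNReal.one_ne_top h)]; simpa using h)).toMeasure))
    (F : V → V → ℝ≥0∞)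
    (hF : ∀ x y, F x y = if x = y then 2 * ∏ e ∈ pathE ρ par x, (p e)⁻¹
      else ∏ e ∈ pathE ρ par x ∩ pathE ρ par y, (p e)⁻¹) :
    capK F {x | IsLeaf ρ par x} ≤
        P {ω | ∃ x, IsLeaf ρ par x ∧ ∀ e ∈ pathE ρ par x, ω e = true} ∧
      P {ω | ∃ x, IsLeaf ρ par x ∧ ∀ e ∈ pathE ρ par x, ω e = true} ≤
        2 * capK F {x | IsLeaf ρ par x} := by
  subst hP
  have hp_top : ∀ e, p e ≠ ⊤ := fun e => ne_top_of_le_ne_top one_ne_top (hp1 e)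
  have hq : ∀ e, (p e).toNNReal ≤ 1 := fun e => by
    rw [← ENNReal.coe_le_coe, ENNReal.coe_toNNReal (hp_top e)]
    exact hp1 e
  have hμp : ∀ e, (PMF.bernoulli (p e).toNNReal (hq e)).toMeasure {true} = p e := fun e =>
    (PMF.bernoulli_toMeasure_true _).trans (ENNReal.coe_toNNReal (hp_top e))
  have hp0' : ∀ e, p e ≠ 0 := fun e => (hp0 e).ne'
  let leaves : Finset V := {x | IsLeaf ρ par x}
  have hleaves : {x | IsLeaf ρ par x} = (leaves : Set V) := by ext; simp [leaves]
  have hS : {ω | ∃ x, IsLeaf ρ par x ∧ ∀ e ∈ pathE ρ par x, ω e = true}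
      = anyOpen leaves (pathE ρ par) := by ext; simp [anyOpen, leaves, mem_allOpen]
  have hF_eq : F = fun x y => (if x = y then 2 else 1) * pathKernel (pathE ρ par) p x y := by
    ext x y
    rw [hF, pathKernel]
    split_ifs with h
    · rw [h, inter_self]
    · rw [one_mul]
  let _ : LinearOrder V := LinearOrder.lift' _ (Fintype.equivFin V).injective
  rw [hS, hleaves, hF_eq]
  exact ⟨capK_le_measure_anyOpen hμp hp0', measure_anyOpen_le_two_mul_capK hμp hp0'
    (isDepthFirst_ancestorList hreach hroot) (ancestorList_injective hreach)⟩
end
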